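/- arXiv:2604.02385 — 8 statements merged into one kernel-verified Lean document; each statement's English description precedes it below -/
import Mathlib

section
/- For any set A ⊆ ℕ, the limit as c → ∞ of the lower f-window density with f(k) = ck equals the lower Pólya density: lim_{c→∞} δ_{f(k)=ck}(A) = d̲_P(A). -/
open Filter

/-- `|A ∩ [m, m+k-1]|` -/
noncomputable def cnt (A : Set ℕ) (m k : ℕ) : ℕ := (A ∩ Set.Ico m (m + k)).ncard

/-- The lower `f`-window density of `A ⊆ ℕ`, for `f : ℕ → ℕ ∪ {∞}`:
`liminf_{k → ∞} min_{1 ≤ m ≤ f(k)} |A ∩ [m, m+k-1]| / k`. -/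
noncomputable def windowDensity (f : ℕ → ℕ∞) (A : Set ℕ) : ℝ :=
  Filter.atTop.liminf fun k : ℕ =>
    sInf {x : ℝ | ∃ m : ℕ, 1 ≤ m ∧ (m : ℕ∞) ≤ f k ∧ x = (cnt A m k : ℝ) / k}

/-- The inner quantity of the lower Pólya density:
`liminf_{n→∞} |A ∩ [θn, n]| / ((1-θ) n)`. -/
noncomputable def polyaInner (A : Set ℕ) (θ : ℝ) : ℝ :=
  Filter.atTop.liminf fun n : ℕ =>
    ((A ∩ {i : ℕ | θ * n ≤ (i : ℝ) ∧ i ≤ n}).ncard : ℝ) / ((1 - θ) * n)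

/-!
For `c ≥ 1` the densities `windowDensity (c·k)` decrease in `c` and so converge to some `L`;
the point is to squeeze `polyaInner A θ` between them as `θ → 1`.

A Pólya window `[θn, n]` has length `ℓ ≥ (1-θ)n` and starts below `c ℓ` once
`1 + θ ≤ c(1-θ)`, so it competes in the minimum defining `windowDensity (c·k)`; this gives
`windowDensity (c·k) ≤ polyaInner A θ`.

Conversely, suppose every Pólya window `(⌈θs⌉ - 1, s]` with `s ≥ N` has density at least `β`.
Tile a window `[m, m+k)` from the right by the Pólya windows `(⌈θs⌉ - 1, s]`, each ending where
the previous one starts, until the start drops below `max m N`. Only an initial segment of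
length at most `(m + N)/θ - m + 1` is left uncovered, and `m ≤ ck` makes this
`≤ c(θ⁻¹ - 1) k + O(1)`. Hence `polyaInner A θ · (1 - c(θ⁻¹ - 1)) ≤ windowDensity (c·k)`,
so `limsup_{θ → 1⁻} polyaInner A θ ≤ windowDensity (c·k)` for every `c`, and these tend to `L`.
-/

open Topology

noncomputable def countIoc (A : Set ℕ) (a b : ℕ) : ℕ := (A ∩ Set.Ioc a b).ncard

section Counting

variable (A : Set ℕ)

lemma cnt_le (m k : ℕ) : cnt A m k ≤ k :=
  (Set.ncard_le_ncard Set.inter_subset_right (Set.finite_Ico _ _)).trans (by simp)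

lemma countIoc_le (a b : ℕ) : countIoc A a b ≤ b - a :=
  (Set.ncard_le_ncard Set.inter_subset_right (Set.finite_Ioc _ _)).trans (by simp)

lemma countIoc_add {a b c : ℕ} (hab : a ≤ b) (hbc : b ≤ c) :
    countIoc A a c = countIoc A a b + countIoc A b c := by
  rw [countIoc, ← Set.Ioc_union_Ioc_eq_Ioc hab hbc, Set.inter_union_distrib_left]
  refine Set.ncard_union_eq ?_ ((Set.finite_Ioc a b).inter_of_right A)
    ((Set.finite_Ioc b c).inter_of_right A)
  exact (Set.Ioc_disjoint_Ioc_of_le le_rfl).mono Set.inter_subset_right Set.inter_subset_right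

lemma countIoc_anti_left {a a' b : ℕ} (h : a ≤ a') : countIoc A a' b ≤ countIoc A a b :=
  Set.ncard_le_ncard (Set.inter_subset_inter_right _ (Set.Ioc_subset_Ioc_left h))
    ((Set.finite_Ioc a b).inter_of_right A)

lemma cnt_add_one_eq_countIoc (a k : ℕ) : cnt A (a + 1) k = countIoc A a (a + k) := by
  rw [cnt, countIoc]
  congr 2
  ext i
  simp only [Set.mem_Ico, Set.mem_Ioc]
  omega

end Counting

lemma exists_mul_sub_le_countIoc (A : Set ℕ) (p : ℕ → ℕ) {M : ℕ} {β : ℝ}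
    (hp : ∀ s, M ≤ p s → p s < s)
    (hwindow : ∀ s, M ≤ p s → β * ((s : ℝ) - p s) ≤ countIoc A (p s) s) (n : ℕ) (hn : M ≤ n) :
    ∃ s, M ≤ s ∧ s ≤ n ∧ p s < M ∧ β * ((n : ℝ) - s) ≤ countIoc A s n := by
  induction n using Nat.strong_induction_on with
  | _ n ih =>
  by_cases hpn : M ≤ p n
  · obtain ⟨s, hMs, hsn, hps, hcount⟩ := ih (p n) (hp n hpn) hpn
    refine ⟨s, hMs, hsn.trans (hp n hpn).le, hps, ?_⟩
    rw [countIoc_add A hsn (hp n hpn).le, Nat.cast_add]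
    linear_combination hcount + hwindow n hpn
  · exact ⟨n, hn, le_rfl, not_le.1 hpn, by simp⟩

noncomputable def polyaStart (θ : ℝ) (n : ℕ) : ℕ := ⌈θ * n⌉₊ - 1

section PolyaStart

variable {θ : ℝ} {n : ℕ}

lemma polyaStart_le (hθ : 0 ≤ θ) : (polyaStart θ n : ℝ) ≤ θ * n := by
  rcases Nat.eq_zero_or_pos ⌈θ * n⌉₊ with h | h
  · simp [polyaStart, h]; positivity
  · rw [polyaStart, Nat.cast_sub h, Nat.cast_one]
    linarith [Nat.ceil_lt_add_one (by positivity : 0 ≤ θ * n)]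

lemma sub_one_le_polyaStart : θ * n - 1 ≤ polyaStart θ n := by
  have : (⌈θ * n⌉₊ : ℝ) ≤ polyaStart θ n + 1 := by
    exact_mod_cast (by unfold polyaStart; omega : ⌈θ * n⌉₊ ≤ polyaStart θ n + 1)
  linarith [Nat.le_ceil (θ * n)]

lemma ceil_mul_le_self (hθ : θ ≤ 1) : ⌈θ * n⌉₊ ≤ n :=
  Nat.ceil_le.2 (mul_le_of_le_one_left n.cast_nonneg hθ)

lemma polyaStart_le_self (hθ : θ ≤ 1) : polyaStart θ n ≤ n :=
  (Nat.sub_le _ 1).trans (ceil_mul_le_self hθ)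

lemma polyaStart_lt_self (hθ : θ ≤ 1) (h : 0 < polyaStart θ n) : polyaStart θ n < n := by
  have := ceil_mul_le_self hθ (n := n)
  unfold polyaStart at *
  omega

lemma mul_le_of_polyaStart_lt {M : ℕ} (h : polyaStart θ n < M) : θ * n ≤ M :=
  Nat.ceil_le.1 (by unfold polyaStart at h; omega)

end PolyaStart

lemma mul_le_cnt_of_forall_polyaWindow (A : Set ℕ) {θ β : ℝ} {N : ℕ} (hθ0 : 0 < θ) (hθ1 : θ ≤ 1)
    (hβ : 0 ≤ β)
    (hwindow : ∀ s, N ≤ s → β * ((s : ℝ) - polyaStart θ s) ≤ countIoc A (polyaStart θ s) s)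
    {m : ℕ} (hm : 1 ≤ m) (k : ℕ) :
    β * (m + k - 1 - (m + N) / θ) ≤ cnt A m k := by
  obtain ⟨a, rfl⟩ : ∃ a, m = a + 1 := ⟨m - 1, by omega⟩
  rw [cnt_add_one_eq_countIoc]
  push_cast
  have hdiv : (a + 1 + N : ℝ) ≤ (a + 1 + N) / θ := le_div_self (by positivity) hθ0 hθ1
  by_cases hM : max (a + 1) N ≤ a + k
  · obtain ⟨s, hMs, hsn, hps, hcount⟩ := exists_mul_sub_le_countIoc A (polyaStart θ)
      (fun s hs => polyaStart_lt_self hθ1 (by omega))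
      (fun s hs => hwindow s (by have := polyaStart_lt_self hθ1 (n := s) (by omega); omega))
      (a + k) hM
    have hs : (s : ℝ) ≤ (a + 1 + N) / θ := by
      rw [le_div_iff₀ hθ0, mul_comm]
      exact (mul_le_of_polyaStart_lt hps).trans (by exact_mod_cast (by omega))
    calc β * (a + 1 + k - 1 - (a + 1 + N) / θ) ≤ β * (((a + k : ℕ) : ℝ) - s) :=
          mul_le_mul_of_nonneg_left (by push_cast; linarith) hβ
      _ ≤ countIoc A s (a + k) := hcount
      _ ≤ countIoc A a (a + k) := by exact_mod_cast countIoc_anti_left A (by omega)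
  · have hk : (k : ℝ) ≤ N := by exact_mod_cast (by omega : k ≤ N)
    exact (mul_nonpos_of_nonneg_of_nonpos hβ (by linarith)).trans (Nat.cast_nonneg _)

noncomputable def minWindowDensity (f : ℕ → ℕ∞) (A : Set ℕ) (k : ℕ) : ℝ :=
  sInf {x : ℝ | ∃ m : ℕ, 1 ≤ m ∧ (m : ℕ∞) ≤ f k ∧ x = (cnt A m k : ℝ) / k}

section MinWindowDensity

variable (f : ℕ → ℕ∞) (A : Set ℕ)

lemma windowDensity_eq_liminf : windowDensity f A = atTop.liminf (minWindowDensity f A) := rfl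

lemma minWindowDensity_nonneg (k : ℕ) : 0 ≤ minWindowDensity f A k :=
  Real.sInf_nonneg (by rintro _ ⟨m, -, -, rfl⟩; positivity)

lemma minWindowDensity_le {k m : ℕ} (hm : 1 ≤ m) (hmf : (m : ℕ∞) ≤ f k) :
    minWindowDensity f A k ≤ cnt A m k / k :=
  csInf_le ⟨0, by rintro _ ⟨m, -, -, rfl⟩; positivity⟩ ⟨m, hm, hmf, rfl⟩

lemma le_minWindowDensity {k : ℕ} {b : ℝ} (hk : 1 ≤ f k)
    (h : ∀ m : ℕ, 1 ≤ m → (m : ℕ∞) ≤ f k → b ≤ cnt A m k / k) : b ≤ minWindowDensity f A k :=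
  le_csInf ⟨_, 1, le_rfl, by exact_mod_cast hk, rfl⟩
    (by rintro _ ⟨m, hm, hmf, rfl⟩; exact h m hm hmf)

lemma minWindowDensity_le_one (k : ℕ) : minWindowDensity f A k ≤ 1 := by
  by_cases hk : 1 ≤ f k
  · exact (minWindowDensity_le f A le_rfl (by exact_mod_cast hk)).trans
      (div_le_one_of_le₀ (by exact_mod_cast cnt_le A 1 k) k.cast_nonneg)
  · have : {x : ℝ | ∃ m : ℕ, 1 ≤ m ∧ (m : ℕ∞) ≤ f k ∧ x = (cnt A m k : ℝ) / k} = ∅ :=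
      Set.eq_empty_of_forall_notMem fun _ ⟨m, hm, hmf, _⟩ =>
        hk ((Nat.one_le_cast.2 hm).trans hmf)
    rw [minWindowDensity, this, Real.sInf_empty]
    exact zero_le_one

lemma isBoundedUnder_ge_minWindowDensity (l : Filter ℕ) :
    l.IsBoundedUnder (· ≥ ·) (minWindowDensity f A) :=
  isBoundedUnder_of ⟨0, minWindowDensity_nonneg f A⟩

lemma isCoboundedUnder_ge_minWindowDensity (l : Filter ℕ) [l.NeBot] :
    l.IsCoboundedUnder (· ≥ ·) (minWindowDensity f A) :=
  isCoboundedUnder_ge_of_le l (minWindowDensity_le_one f A)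

lemma windowDensity_nonneg : 0 ≤ windowDensity f A :=
  le_liminf_of_le (isCoboundedUnder_ge_minWindowDensity f A atTop)
    (Eventually.of_forall (minWindowDensity_nonneg f A))

variable {f} in
lemma windowDensity_anti {f' : ℕ → ℕ∞} (hf : ∀ᶠ k in atTop, 1 ≤ f k) (hff' : f ≤ f') :
    windowDensity f' A ≤ windowDensity f A :=
  liminf_le_liminf
    (hf.mono fun k hk => le_minWindowDensity f A hk fun _ hm hmf =>
      minWindowDensity_le f' A hm (hmf.trans (hff' k)))
    (isBoundedUnder_ge_minWindowDensity f' A atTop) (isCoboundedUnder_ge_minWindowDensity f A atTop)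

end MinWindowDensity

abbrev linearBound (c : ℕ) : ℕ → ℕ∞ := fun k => ((c * k : ℕ) : ℕ∞)

lemma one_le_linearBound {c k : ℕ} (hc : 1 ≤ c) (hk : 1 ≤ k) : 1 ≤ linearBound c k :=
  Nat.one_le_cast.2 (Nat.one_le_iff_ne_zero.2 (Nat.mul_ne_zero (by omega) (by omega)))

lemma windowDensity_linearBound_anti (A : Set ℕ) {c c' : ℕ} (hc : 1 ≤ c) (hcc' : c ≤ c') :
    windowDensity (linearBound c') A ≤ windowDensity (linearBound c) A :=
  windowDensity_anti A ((eventually_ge_atTop 1).mono fun _ => one_le_linearBound hc)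
    fun k => Nat.cast_le.2 (Nat.mul_le_mul_right k hcc')

lemma mul_le_minWindowDensity (A : Set ℕ) {θ β : ℝ} {N c k : ℕ} (hθ0 : 0 < θ) (hθ1 : θ ≤ 1)
    (hβ : 0 ≤ β)
    (hwindow : ∀ s, N ≤ s → β * ((s : ℝ) - polyaStart θ s) ≤ countIoc A (polyaStart θ s) s)
    (hc : 1 ≤ c) (hk : 1 ≤ k) :
    β * (1 - c * (θ⁻¹ - 1) - (1 + N / θ) / k) ≤ minWindowDensity (linearBound c) A k := by
  refine le_minWindowDensity _ A (one_le_linearBound hc hk) fun m hm hmc => ?_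
  replace hmc : (m : ℝ) ≤ c * k := by exact_mod_cast hmc
  have hθinv : 0 ≤ θ⁻¹ - 1 := sub_nonneg.2 ((one_le_inv₀ hθ0).2 hθ1)
  have hk0 : (0 : ℝ) < k := by exact_mod_cast hk
  rw [le_div_iff₀ hk0]
  calc β * (1 - c * (θ⁻¹ - 1) - (1 + N / θ) / k) * k
      = β * (k - 1 - c * k * (θ⁻¹ - 1) - N / θ) := by field_simp; ring
    _ ≤ β * (m + k - 1 - (m + N) / θ) := by
      refine mul_le_mul_of_nonneg_left ?_ hβ
      rw [add_div, div_eq_mul_inv (m : ℝ)]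
      linarith [mul_le_mul_of_nonneg_right hmc hθinv]
    _ ≤ cnt A m k := mul_le_cnt_of_forall_polyaWindow A hθ0 hθ1 hβ hwindow hm k

lemma mul_le_windowDensity (A : Set ℕ) {θ β : ℝ} {N c : ℕ} (hθ0 : 0 < θ) (hθ1 : θ ≤ 1)
    (hβ : 0 ≤ β)
    (hwindow : ∀ s, N ≤ s → β * ((s : ℝ) - polyaStart θ s) ≤ countIoc A (polyaStart θ s) s)
    (hc : 1 ≤ c) :
    β * (1 - c * (θ⁻¹ - 1)) ≤ windowDensity (linearBound c) A := by
  have hlim : Tendsto (fun k : ℕ => β * (1 - c * (θ⁻¹ - 1) - (1 + N / θ) / k)) atTop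
      (𝓝 (β * (1 - c * (θ⁻¹ - 1)))) := by
    simpa using ((tendsto_const_div_atTop_nhds_zero_nat (1 + N / θ)).const_sub
      (1 - c * (θ⁻¹ - 1))).const_mul β
  rw [← hlim.liminf_eq]
  exact liminf_le_liminf ((eventually_ge_atTop 1).mono fun k hk =>
      mul_le_minWindowDensity A hθ0 hθ1 hβ hwindow hc hk)
    hlim.isBoundedUnder_ge (isCoboundedUnder_ge_minWindowDensity _ A atTop)

noncomputable def polyaRatio (A : Set ℕ) (θ : ℝ) (n : ℕ) : ℝ :=
  ((A ∩ {i : ℕ | θ * n ≤ (i : ℝ) ∧ i ≤ n}).ncard : ℝ) / ((1 - θ) * n)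

section PolyaRatio

variable (A : Set ℕ) {θ : ℝ}

lemma polyaInner_eq_liminf : polyaInner A θ = atTop.liminf (polyaRatio A θ) := rfl

lemma polyaRatio_eq (hθ : 0 < θ) (n : ℕ) :
    polyaRatio A θ n = countIoc A (polyaStart θ n) n / ((1 - θ) * n) := by
  rcases Nat.eq_zero_or_pos n with rfl | hn
  · simp [polyaRatio]
  have hpos : 0 < ⌈θ * n⌉₊ := Nat.ceil_pos.2 (by positivity)
  rw [polyaRatio, countIoc, polyaStart]
  congr 4
  ext i
  simp only [Set.mem_ofPred_eq, Set.mem_Ioc, ← Nat.ceil_le]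
  omega

lemma polyaRatio_nonneg (hθ : θ ≤ 1) (n : ℕ) : 0 ≤ polyaRatio A θ n :=
  div_nonneg (Nat.cast_nonneg _) (mul_nonneg (sub_nonneg.2 hθ) n.cast_nonneg)

lemma polyaRatio_le (hθ0 : 0 < θ) (hθ1 : θ < 1) (n : ℕ) : polyaRatio A θ n ≤ (1 - θ)⁻¹ := by
  rcases Nat.eq_zero_or_pos n with rfl | hn
  · simp [polyaRatio, hθ1.le]
  rw [polyaRatio_eq A hθ0, div_le_iff₀ (by have := sub_pos.2 hθ1; positivity),
    inv_mul_cancel_left₀ (sub_pos.2 hθ1).ne']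
  exact_mod_cast (countIoc_le A _ n).trans (Nat.sub_le n _)

end PolyaRatio

lemma eventually_mul_le_countIoc (A : Set ℕ) {θ β : ℝ} (hθ0 : 0 < θ) (hθ1 : θ < 1) (hβ0 : 0 ≤ β)
    (hβ : β < polyaInner A θ) :
    ∀ᶠ s : ℕ in atTop, β * ((s : ℝ) - polyaStart θ s) ≤ countIoc A (polyaStart θ s) s := by
  obtain ⟨B, hβB, hB⟩ := exists_between hβ
  rw [polyaInner_eq_liminf] at hB
  have hgrow : Tendsto (fun s : ℕ => (B - β) * ((1 - θ) * s)) atTop atTop :=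
    (tendsto_natCast_atTop_atTop.const_mul_atTop (sub_pos.2 hθ1)).const_mul_atTop (sub_pos.2 hβB)
  filter_upwards [eventually_lt_of_lt_liminf hB (isBoundedUnder_of ⟨0, polyaRatio_nonneg A hθ1.le⟩),
    hgrow.eventually_ge_atTop β, eventually_gt_atTop 0] with s hs hgs hs0
  rw [polyaRatio_eq A hθ0, lt_div_iff₀ (by have := sub_pos.2 hθ1; positivity)] at hs
  have hlen : (s : ℝ) - polyaStart θ s ≤ (1 - θ) * s + 1 := by
    linarith [sub_one_le_polyaStart (θ := θ) (n := s)]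
  calc β * ((s : ℝ) - polyaStart θ s) ≤ β * ((1 - θ) * s + 1) :=
        mul_le_mul_of_nonneg_left hlen hβ0
    _ ≤ B * ((1 - θ) * s) := by linear_combination hgs
    _ ≤ countIoc A (polyaStart θ s) s := hs.le

lemma polyaInner_mul_le_windowDensity (A : Set ℕ) {θ : ℝ} {c : ℕ} (hθ0 : 0 < θ) (hθ1 : θ < 1)
    (hc : 1 ≤ c) (hcθ : c * (θ⁻¹ - 1) < 1) :
    polyaInner A θ * (1 - c * (θ⁻¹ - 1)) ≤ windowDensity (linearBound c) A := by
  have hf : 0 < 1 - c * (θ⁻¹ - 1) := sub_pos.2 hcθ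
  rw [← le_div_iff₀ hf]
  refine le_of_forall_lt_imp_le_of_dense fun β hβ => ?_
  rw [le_div_iff₀ hf]
  rcases le_or_gt β 0 with hβ0 | hβ0
  · exact (mul_nonpos_of_nonpos_of_nonneg hβ0 hf.le).trans (windowDensity_nonneg _ A)
  · obtain ⟨N, hN⟩ := (eventually_mul_le_countIoc A hθ0 hθ1 hβ0.le hβ).exists_forall_of_atTop
    exact mul_le_windowDensity A hθ0 hθ1.le hβ0.le hN hc

lemma windowDensity_le_polyaInner (A : Set ℕ) {θ : ℝ} {c : ℕ} (hθ0 : 0 < θ) (hθ1 : θ < 1)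
    (hc : 1 + θ ≤ c * (1 - θ)) :
    windowDensity (linearBound c) A ≤ polyaInner A θ := by
  set ℓ : ℕ → ℕ := fun n => n - polyaStart θ n
  have hℓ : ∀ n, (1 - θ) * n ≤ ℓ n := fun n => by
    simp only [ℓ, Nat.cast_sub (polyaStart_le_self hθ1.le)]
    linarith [polyaStart_le hθ0.le (n := n)]
  have hℓtend : Tendsto ℓ atTop atTop := tendsto_natCast_atTop_iff.1 <|
    tendsto_atTop_mono hℓ (tendsto_natCast_atTop_atTop.const_mul_atTop (sub_pos.2 hθ1))
  have hcompare : ∀ n, 0 < n → minWindowDensity (linearBound c) A (ℓ n) ≤ polyaRatio A θ n := by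
    intro n hn
    have hden : 0 < (1 - θ) * n := by have := sub_pos.2 hθ1; positivity
    have hn1 : (1 : ℝ) ≤ n := by exact_mod_cast hn
    have hstart : (polyaStart θ n : ℝ) + 1 ≤ c * ℓ n :=
      calc (polyaStart θ n : ℝ) + 1 ≤ (1 + θ) * n := by linarith [polyaStart_le hθ0.le (n := n)]
        _ ≤ c * (1 - θ) * n := by gcongr
        _ ≤ c * ℓ n := by rw [mul_assoc]; gcongr; exact hℓ n
    calc minWindowDensity (linearBound c) A (ℓ n)
        ≤ cnt A (polyaStart θ n + 1) (ℓ n) / ℓ n :=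
          minWindowDensity_le _ A (by omega) (by exact_mod_cast hstart)
      _ = countIoc A (polyaStart θ n) n / ℓ n := by
          rw [cnt_add_one_eq_countIoc, Nat.add_sub_cancel' (polyaStart_le_self hθ1.le)]
      _ ≤ countIoc A (polyaStart θ n) n / ((1 - θ) * n) :=
          div_le_div_of_nonneg_left (Nat.cast_nonneg _) hden (hℓ n)
      _ = polyaRatio A θ n := (polyaRatio_eq A hθ0 n).symm
  rw [windowDensity_eq_liminf, polyaInner_eq_liminf]
  calc atTop.liminf (minWindowDensity (linearBound c) A)
      ≤ atTop.liminf (minWindowDensity (linearBound c) A ∘ ℓ) := by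
        rw [liminf_comp]
        exact liminf_le_liminf_of_le hℓtend (isBoundedUnder_ge_minWindowDensity _ A _)
          (isCoboundedUnder_ge_minWindowDensity _ A _)
    _ ≤ atTop.liminf (polyaRatio A θ) :=
      liminf_le_liminf ((eventually_gt_atTop 0).mono hcompare)
        (isBoundedUnder_of ⟨0, fun n => minWindowDensity_nonneg _ A (ℓ n)⟩)
        (isCoboundedUnder_ge_of_le _ (polyaRatio_le A hθ0 hθ1))

lemma eventually_windowDensity_le_polyaInner (A : Set ℕ) {θ : ℝ} (hθ0 : 0 < θ) (hθ1 : θ < 1) :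
    ∀ᶠ c : ℕ in atTop, windowDensity (linearBound c) A ≤ polyaInner A θ :=
  ((tendsto_natCast_atTop_atTop.atTop_mul_const (sub_pos.2 hθ1)).eventually_ge_atTop
    (1 + θ)).mono fun _ hc => windowDensity_le_polyaInner A hθ0 hθ1 hc

lemma eventually_polyaInner_lt (A : Set ℕ) {c : ℕ} {a : ℝ} (hc : 1 ≤ c)
    (ha : windowDensity (linearBound c) A < a) : ∀ᶠ θ in 𝓝[<] 1, polyaInner A θ < a := by
  have hgap : Tendsto (fun θ : ℝ => c * (θ⁻¹ - 1)) (𝓝[<] 1) (𝓝 0) := by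
    have : ContinuousAt (fun θ : ℝ => c * (θ⁻¹ - 1)) 1 := by fun_prop (disch := norm_num)
    simpa using this.tendsto.mono_left nhdsWithin_le_nhds
  have hbound : Tendsto (fun θ : ℝ => windowDensity (linearBound c) A / (1 - c * (θ⁻¹ - 1)))
      (𝓝[<] 1) (𝓝 (windowDensity (linearBound c) A)) := by
    have := (tendsto_const_nhds (x := windowDensity (linearBound c) A)).div
      (tendsto_const_nhds.sub hgap) (by norm_num : (1 : ℝ) - 0 ≠ 0)
    rwa [sub_zero, div_one] at this
  filter_upwards [hbound.eventually (gt_mem_nhds ha), hgap.eventually (gt_mem_nhds one_pos),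
    Ioo_mem_nhdsLT zero_lt_one] with θ hlt hgapθ ⟨hθ0, hθ1⟩
  refine lt_of_le_of_lt ?_ hlt
  rw [le_div_iff₀ (sub_pos.2 hgapθ)]
  exact polyaInner_mul_le_windowDensity A hθ0 hθ1 hc hgapθ

/-- As `c → ∞`, the lower `f`-window densities for `f(k) = c·k` converge to the
lower Pólya density `d̲_P(A) = lim_{θ→1⁻} liminf_n |A ∩ [θn,n]|/((1-θ)n)`. -/
theorem tendsto_windowDensity_linear_polya (A : Set ℕ) :
    ∃ L : ℝ, Filter.Tendsto (polyaInner A) (nhdsWithin 1 (Set.Iio 1)) (nhds L) ∧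
      Filter.Tendsto (fun c : ℕ => windowDensity (fun k => ((c * k : ℕ) : ℕ∞)) A)
        Filter.atTop (nhds L) := by
  set g : ℕ → ℝ := fun c => windowDensity (linearBound c) A
  have hanti : Antitone fun c => g (c + 1) := fun c c' h =>
    windowDensity_linearBound_anti A (by omega) (by omega)
  have hg : Tendsto (fun c => g (c + 1)) atTop (𝓝 (⨅ c, g (c + 1))) :=
    tendsto_atTop_ciInf hanti ⟨0, Set.forall_mem_range.2 fun _ => windowDensity_nonneg _ A⟩
  refine ⟨_, tendsto_order.2 ⟨fun a ha => ?_, fun a ha => ?_⟩, (tendsto_add_atTop_iff_nat 1).1 hg⟩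
  · filter_upwards [Ioo_mem_nhdsLT zero_lt_one] with θ ⟨hθ0, hθ1⟩
    obtain ⟨c, hc⟩ := ((tendsto_add_atTop_nat 1).eventually
      (eventually_windowDensity_le_polyaInner A hθ0 hθ1)).exists
    exact ha.trans_le ((hanti.le_of_tendsto hg c).trans hc)
  · obtain ⟨c, hc⟩ := (hg.eventually (gt_mem_nhds ha)).exists
    exact eventually_polyaInner_lt A c.succ_pos hc
end

section
/- An increasing function f : ℕ → ℕ is nice if and only if it is not universally bounded above. -/
/-! A nice function has `a₁ ≤ f k₁` with `a₁` above any prescribed `T`, so it cannot be bounded.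
Conversely, for unbounded monotone `f` two terms already suffice: take `k₁` with `T < f k₁`,
then `k₂ ≥ k₁` with `T + k₁ + 1 < f k₂`, and `a₁ = T + 1`, `a₂ = T + k₁ + 2`. -/

/-- A function `f : ℕ → ℕ` is *nice* if for every `T > 0` there exist `m ≥ 2` and
sequences `(k_i)_{i=1}^m`, `(a_i)_{i=1}^m` of natural numbers with
`k_1 ≤ ⋯ ≤ k_m`, `T < a_1 < ⋯ < a_m`, `a_{i+1} ≥ a_i + k_i + 1` and `a_i ≤ f(k_i)`. -/
def Nice (f : ℕ → ℕ) : Prop :=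
  ∀ T : ℕ, 0 < T → ∃ m : ℕ, 2 ≤ m ∧ ∃ k a : ℕ → ℕ,
    (∀ i j, 1 ≤ i → i ≤ j → j ≤ m → k i ≤ k j) ∧
    (T < a 1) ∧
    (∀ i, 1 ≤ i → i < m → a i < a (i + 1)) ∧
    (∀ i, 1 ≤ i → i < m → a i + k i + 1 ≤ a (i + 1)) ∧
    (∀ i, 1 ≤ i → i ≤ m → a i ≤ f (k i))

theorem Nice.not_bounded {f : ℕ → ℕ} (hf : Nice f) : ¬ ∃ M : ℕ, ∀ n : ℕ, f n ≤ M := by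
  rintro ⟨M, hM⟩
  obtain ⟨m, hm, k, a, -, hT, -, -, hle⟩ := hf (M + 1) M.succ_pos
  have := hle 1 le_rfl (by omega)
  have := hM (k 1)
  omega

theorem nice_of_forall_exists_pair {f : ℕ → ℕ}
    (h : ∀ T : ℕ, ∃ k₁ k₂, k₁ ≤ k₂ ∧ T < f k₁ ∧ T + k₁ + 1 < f k₂) : Nice f := by
  intro T _
  obtain ⟨k₁, k₂, hk, h₁, h₂⟩ := h T
  refine ⟨2, le_rfl, fun i => if i ≤ 1 then k₁ else k₂,
    fun i => if i ≤ 1 then T + 1 else T + k₁ + 2, ?_, ?_, ?_, ?_, ?_⟩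
  all_goals
    intros
    dsimp only
    split_ifs <;> omega

theorem Monotone.exists_pair_of_unbounded {f : ℕ → ℕ} (hf : Monotone f)
    (hub : ¬ ∃ M : ℕ, ∀ n : ℕ, f n ≤ M) (T : ℕ) :
    ∃ k₁ k₂, k₁ ≤ k₂ ∧ T < f k₁ ∧ T + k₁ + 1 < f k₂ := by
  simp only [not_exists, not_forall, not_le] at hub
  obtain ⟨k₁, h₁⟩ := hub T
  obtain ⟨n, h₂⟩ := hub (T + k₁ + 1)
  exact ⟨k₁, max k₁ n, le_max_left _ _, h₁, h₂.trans_le (hf (le_max_right _ _))⟩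

/-- An increasing function `f : ℕ → ℕ` is nice if and only if it is not
universally bounded above. -/
theorem nice_iff_unbounded (f : ℕ → ℕ) (hf : Monotone f) :
    Nice f ↔ ¬ ∃ M : ℕ, ∀ n : ℕ, f n ≤ M :=
  ⟨Nice.not_bounded, fun hub => nice_of_forall_exists_pair (hf.exists_pair_of_unbounded hub)⟩
end

section
/- Let T be a rooted tree, let Q_1, …, Q_s (s ≥ 2) be a finite sequence of vertices, and let Q be their least common ancestor. Then there exists an index i ∈ {1, …, s-1} such that the least common ancestor of Q_i and Q_{i+1} equals Q. -/
/-!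
`lcp` is the meet of the prefix order, so `L (s - 1)` is the longest common prefix `M` of
`Q 0, …, Q (s - 1)` and is a prefix of every adjacent `lcp (Q i) (Q (i + 1))`. If all of these
were strictly longer than `M`, the first `|M| + 1` letters of `Q 0` would be passed along the
chain to every `Q i`, hence would be a common prefix longer than `M`.
-/

/-- Longest common prefix of two lists.  Modelling a rooted tree by identifying each
vertex with the list of edge-labels on its root-path, `lcp` computes the least
common ancestor of two vertices and the prefix order is the ancestor order. -/
def lcp {α : Type*} [DecidableEq α] : List α → List α → List α
  | a :: as, b :: bs => if a = b then a :: lcp as bs else []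
  | _, _ => []

section lcp

variable {α : Type*} [DecidableEq α]

theorem lcp_prefix_left : ∀ a b : List α, lcp a b <+: a
  | [], b => by cases b <;> simp [lcp]
  | _ :: _, [] => by simp [lcp]
  | a :: as, b :: bs => by
    by_cases h : a = b
    · simpa [lcp, h, List.cons_prefix_cons] using lcp_prefix_left as bs
    · simp [lcp, h]

theorem lcp_prefix_right : ∀ a b : List α, lcp a b <+: b
  | [], b => by cases b <;> simp [lcp]
  | _ :: _, [] => by simp [lcp]
  | a :: as, b :: bs => by
    by_cases h : a = b
    · subst h
      simpa [lcp, List.cons_prefix_cons] using lcp_prefix_right as bs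
    · simp [lcp, h]

theorem prefix_of_prefix_lcp : ∀ {p a b : List α}, p <+: a → p <+: b → p <+: lcp a b
  | [], _, _, _, _ => List.nil_prefix
  | x :: p, _, _, ⟨ta, rfl⟩, ⟨tb, rfl⟩ => by
    simpa [lcp, List.cons_prefix_cons] using prefix_of_prefix_lcp (p := p) ⟨ta, rfl⟩ ⟨tb, rfl⟩

theorem prefix_lcp_iff {p a b : List α} : p <+: lcp a b ↔ p <+: a ∧ p <+: b :=
  ⟨fun h => ⟨h.trans (lcp_prefix_left a b), h.trans (lcp_prefix_right a b)⟩,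
    fun h => prefix_of_prefix_lcp h.1 h.2⟩

theorem prefix_of_prefix_of_length_le_lcp {p a b : List α} (hpa : p <+: a)
    (hp : p.length ≤ (lcp a b).length) : p <+: b :=
  (List.prefix_of_prefix_length_le hpa (lcp_prefix_left a b) hp).trans (lcp_prefix_right a b)

theorem prefix_of_length_le_lcp_succ (Q : ℕ → List α) {p : List α} {s : ℕ} (h0 : p <+: Q 0)
    (hadj : ∀ i, i + 1 < s → p.length ≤ (lcp (Q i) (Q (i + 1))).length) :
    ∀ i, i < s → p <+: Q i
  | 0, _ => h0
  | i + 1, hi =>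
    prefix_of_prefix_of_length_le_lcp (prefix_of_length_le_lcp_succ Q h0 hadj i (by omega))
      (hadj i hi)

theorem prefix_scanl_lcp_iff (Q L : ℕ → List α) (hL0 : L 0 = Q 0)
    (hLs : ∀ i, L (i + 1) = lcp (L i) (Q (i + 1))) {p : List α} :
    ∀ n, p <+: L n ↔ ∀ j ≤ n, p <+: Q j
  | 0 => by simp [hL0]
  | n + 1 => by
    rw [hLs, prefix_lcp_iff, prefix_scanl_lcp_iff Q L hL0 hLs n]
    exact ⟨fun ⟨h, hn⟩ j hj => (Nat.le_succ_iff.1 hj).elim (h j) (· ▸ hn),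
      fun h => ⟨fun j hj => h j (by omega), h (n + 1) le_rfl⟩⟩

end lcp

/-- Given vertices `Q 0, …, Q (s-1)` of a rooted tree (`s ≥ 2`) with least common
ancestor `L (s-1)` (computed by iterated pairwise `lcp`), there is an adjacent pair
`Q i, Q (i+1)` whose least common ancestor is already the least common ancestor of
the whole sequence. -/
theorem exists_adjacent_lca {α : Type*} [DecidableEq α] (s : ℕ) (hs : 2 ≤ s)
    (Q : ℕ → List α) (L : ℕ → List α) (hL0 : L 0 = Q 0)
    (hLs : ∀ i, L (i + 1) = lcp (L i) (Q (i + 1))) :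
    ∃ i, i + 1 < s ∧ lcp (Q i) (Q (i + 1)) = L (s - 1) := by
  have hL := fun p => prefix_scanl_lcp_iff Q L hL0 hLs (p := p) (s - 1)
  set M := L (s - 1)
  have hMQ : ∀ j ≤ s - 1, M <+: Q j := (hL M).1 List.prefix_rfl
  by_contra! hne
  have hlt : ∀ i, i + 1 < s → M.length < (lcp (Q i) (Q (i + 1))).length := fun i hi =>
    have hM : M <+: lcp (Q i) (Q (i + 1)) :=
      prefix_of_prefix_lcp (hMQ i (by omega)) (hMQ (i + 1) (by omega))
    hM.length_le.lt_of_ne fun h => hne i hi (hM.eq_of_length h).symm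
  set T := (Q 0).take (M.length + 1)
  have hT : T.length = M.length + 1 := by
    have := (lcp_prefix_left (Q 0) (Q (0 + 1))).length_le
    have := hlt 0 hs
    simp only [T, List.length_take]
    omega
  have hTQ := prefix_of_length_le_lcp_succ Q (List.take_prefix _ _)
    fun i hi => hT.trans_le (hlt i hi)
  have hTM : T <+: M := (hL T).2 fun j hj => hTQ j (by omega)
  have := hTM.length_le
  omega
end

section
/- In the combinatorial interval game on I = [1, ℓ] with a filtration Y_1 ⊂ ⋯ ⊂ Y_r of finite subsets of ℤ with I ⊆ Y_r, where the adversary places black stones on fresh positions in I and the algorithm responds greedily by placing a white stone at an available element of the currently visible set Y^{(t)} minimizing relative distance to the adversary's move, the game ending when all of I is covered by black stones: the number of white stones in I at termination satisfies |W_T|/|I| ≥ 1/2 − O_r((log ℓ)/ℓ); more precisely |W_T| ≥ (ℓ − (2r log₂ ℓ + r))/2. -/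
/-- A transcript of the combinatorial interval game on `I = [1, ℓ] ⊆ ℤ`,
with a filtration `Y 1 ⊆ ⋯ ⊆ Y r` of finite subsets of `ℤ`, `I ⊆ Y r`. -/
structure GameData where
  /-- length of the interior board `I = [1, ℓ]` -/
  ell : ℕ
  /-- number of levels of the filtration -/
  r : ℕ
  /-- number of turns until termination -/
  T : ℕ
  /-- the filtration of visible finite sets -/
  Y : ℕ → Finset ℤ
  /-- the visibility index at each turn -/
  vis : ℕ → ℕ
  /-- the adversary's (black-stone) move at each turn -/
  a : ℕ → ℤ
  /-- the algorithm's (white-stone) move at each turn, `none` = skip -/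
  o : ℕ → Option ℤ
  /-- Nature-help white stones placed at the start of each turn -/
  help : ℕ → Finset ℤ
  /-- elements reserved by Nature at the end of each turn -/
  res : ℕ → Finset ℤ

namespace GameData

/-- The interior board `I = [1, ℓ]`. -/
noncomputable def I (G : GameData) : Finset ℤ := Finset.Icc 1 (G.ell : ℤ)

/-- Black stones placed during turns `< t`. -/
def black (G : GameData) (t : ℕ) : Finset ℤ := (Finset.range t).image G.a

/-- White stones (Nature help and algorithm outputs) placed during turns `< t`. -/
def white (G : GameData) (t : ℕ) : Finset ℤ :=
  (Finset.range t).biUnion fun s => G.help s ∪ (G.o s).toFinset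

/-- Positions occupied by a stone before turn `t`. -/
def occupiedBefore (G : GameData) (t : ℕ) : Finset ℤ := G.black t ∪ G.white t

/-- Positions reserved before turn `t`. -/
def reserved (G : GameData) (t : ℕ) : Finset ℤ := (Finset.range t).biUnion G.res

/-- The rank of `x` in the increasing enumeration of the finite set `Y`. -/
def rank (Y : Finset ℤ) (x : ℤ) : ℕ := (Y.filter fun y => y < x).card

/-- The relative distance between `x` and `y` with respect to `Y`:
the difference of their ranks in the increasing enumeration of `Y`. -/
def rdist (Y : Finset ℤ) (x y : ℤ) : ℕ := ((rank Y x : ℤ) - (rank Y y : ℤ)).natAbs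

/-- Positions available to the algorithm at turn `t`: elements of the visible set
not occupied by any stone (including this turn's Nature help and adversary move)
and not reserved. -/
def avail (G : GameData) (t : ℕ) : Finset ℤ :=
  G.Y (G.vis t) \ (G.occupiedBefore t ∪ G.help t ∪ {G.a t} ∪ G.reserved t)

/-- The rules of the game. -/
def Valid (G : GameData) : Prop :=
  1 ≤ G.ell ∧ 1 ≤ G.r ∧
  -- filtration of finite sets with I ⊆ Y r
  (∀ i j, i ≤ j → G.Y i ⊆ G.Y j) ∧ G.I ⊆ G.Y G.r ∧
  -- the visibility index is the least level containing all black stones so far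
  (∀ t, t < G.T → 1 ≤ G.vis t ∧ G.vis t ≤ G.r ∧ G.black (t + 1) ⊆ G.Y (G.vis t) ∧
    ∀ i, 1 ≤ i → i < G.vis t → ¬ G.black (t + 1) ⊆ G.Y i) ∧
  -- Nature help: white stones placed in I on unoccupied positions
  (∀ t, t < G.T → G.help t ⊆ G.I ∧ Disjoint (G.help t) (G.occupiedBefore t)) ∧
  -- the adversary plays a position of I it has not used before
  (∀ t, t < G.T → G.a t ∈ G.I ∧ G.a t ∉ (Finset.range t).image G.a) ∧
  -- greedy algorithm: if an available position exists in I ∩ Y^{(t)}, place a white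
  -- stone on an available element of Y^{(t)} minimizing relative distance to a t
  (∀ t, t < G.T → (∃ x ∈ G.I, x ∈ G.avail t) →
    ∃ w, G.o t = some w ∧ w ∈ G.avail t ∧
      ∀ z ∈ G.avail t, rdist (G.Y (G.vis t)) w (G.a t) ≤ rdist (G.Y (G.vis t)) z (G.a t)) ∧
  -- otherwise the algorithm skips (possibly Nature places a white stone outside I)
  (∀ t, t < G.T → (¬ ∃ x ∈ G.I, x ∈ G.avail t) →
    G.o t = none ∨ ∃ w, G.o t = some w ∧ w ∈ G.avail t ∧ w ∉ G.I) ∧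
  -- reservations: unused elements of the visible set outside I
  (∀ t, t < G.T → G.res t ⊆ G.Y (G.vis t) ∧ (∀ x ∈ G.res t, x ∉ G.I) ∧
    Disjoint (G.res t) (G.occupiedBefore (t + 1))) ∧
  -- termination: at turn T the black stones cover I
  G.I ⊆ G.black G.T

end GameData

open Finset

namespace GameData

section Rank

variable (Y : Finset ℤ)

theorem rank_mono : Monotone (rank Y) := fun _ _ h =>
  card_le_card (monotone_filter_right Y fun _ _ hz => hz.trans_le h)

theorem rank_lt_rank {a b : ℤ} (ha : a ∈ Y) (h : a < b) : rank Y a < rank Y b := by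
  refine card_lt_card ((ssubset_iff_of_subset
    (monotone_filter_right Y fun _ _ hz => hz.trans h)).2 ⟨a, ?_, ?_⟩) <;> simp [ha, h]

theorem rank_add_le (a : ℤ) (n : ℕ) : rank Y (a + n) ≤ rank Y a + n := by
  induction n with
  | zero => simp
  | succ n ih =>
    have hsub : Y.filter (· < a + n + 1) ⊆ insert (a + n) (Y.filter (· < a + n)) := by
      intro z hz
      simp only [mem_filter, mem_insert] at hz ⊢
      grind
    rw [Nat.cast_succ, ← add_assoc]
    calc rank Y (a + n + 1) ≤ rank Y (a + n) + 1 := (card_le_card hsub).trans (card_insert_le _ _)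
      _ ≤ rank Y a + (n + 1) := by omega

theorem rank_add_gap_le_of_rdist_le_right {a b w z : ℤ} (hz : z ∈ Y) (hzb : z < b)
    (hab : a ≤ b) (hbw : b ≤ w) (hd : rdist Y w a ≤ rdist Y z a) :
    rank Y z + (rank Y b - rank Y a) ≤ rank Y a := by
  have := rank_mono Y hab
  have := rank_mono Y hbw
  have := rank_lt_rank Y hz hzb
  unfold rdist at hd
  rcases le_total a z with h | h <;> have := rank_mono Y h <;> omega

theorem rank_add_gap_le_of_rdist_le_left {a c w z : ℤ} (hw : w ∈ Y) (hwc : w < c)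
    (hca : c ≤ a) (hcz : c ≤ z) (hd : rdist Y w a ≤ rdist Y z a) :
    rank Y a + (rank Y a + 1 - rank Y c) ≤ rank Y z := by
  have := rank_mono Y hca
  have := rank_mono Y hcz
  have := rank_lt_rank Y hw hwc
  unfold rdist at hd
  rcases le_total a z with h | h <;> have := rank_mono Y h <;> omega

end Rank

theorem injOn_of_forall_lt_ne {α β : Type*} [LinearOrder α] {f : α → β} {s : Set α}
    (h : ∀ x ∈ s, ∀ y ∈ s, x < y → f x ≠ f y) : s.InjOn f :=
  Set.injOn_iff_pairwise_ne.2 fun x hx y hy hne =>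
    hne.lt_or_gt.elim (h x hx y hy) fun hlt => (h y hy x hx hlt).symm

theorem exists_two_pow_card_sub_one_le {α : Type*} [LinearOrder α] {S : Finset α} {f : α → ℕ}
    (hpos : ∀ t ∈ S, 1 ≤ f t) (hdouble : ∀ s ∈ S, ∀ t ∈ S, s < t → 2 * f s ≤ f t)
    (hS : S.Nonempty) : ∃ t ∈ S, 2 ^ (#S - 1) ≤ f t := by
  induction S using Finset.induction_on_max with
  | empty => exact absurd hS (by simp)
  | insert a s hlt ih =>
    refine ⟨a, mem_insert_self a s, ?_⟩
    rw [card_insert_of_notMem fun h => (hlt a h).false, Nat.add_sub_cancel]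
    rcases s.eq_empty_or_nonempty with rfl | hs
    · simpa using hpos a (mem_insert_self a ∅)
    obtain ⟨t, ht, hft⟩ := ih (fun t ht => hpos t (mem_insert_of_mem ht))
      (fun s hs t ht => hdouble s (mem_insert_of_mem hs) t (mem_insert_of_mem ht)) hs
    calc 2 ^ #s = 2 * 2 ^ (#s - 1) := (mul_pow_sub_one hs.card_pos.ne' 2).symm
      _ ≤ 2 * f t := by omega
      _ ≤ f a := hdouble t (mem_insert_of_mem ht) a (mem_insert_self a s) (hlt t ht)

theorem two_pow_add_le_sq {x y m : ℕ} (hm : 2 ≤ m) (hx : 0 < x → 2 ^ (x - 1) ≤ m)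
    (hy : 0 < y → 2 ^ (y - 1) ≤ m) (hxy : 0 < x → 0 < y → 2 ^ (x - 1) + 2 ^ (y - 1) ≤ m) :
    2 ^ (x + y) ≤ m ^ 2 := by
  have hm2 : 2 * m ≤ m ^ 2 := by nlinarith
  rcases Nat.eq_zero_or_pos x with rfl | hx0 <;> rcases Nat.eq_zero_or_pos y with rfl | hy0
  · simpa using Nat.one_le_pow 2 m (by omega)
  · rw [zero_add, ← mul_pow_sub_one hy0.ne']
    linarith [hy hy0]
  · rw [add_zero, ← mul_pow_sub_one hx0.ne']
    linarith [hx hx0]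
  · calc 2 ^ (x + y) = 4 * 2 ^ (x - 1) * 2 ^ (y - 1) := by
          rw [pow_add, ← mul_pow_sub_one hx0.ne', ← mul_pow_sub_one hy0.ne']; ring
      _ ≤ (2 ^ (x - 1) + 2 ^ (y - 1)) ^ 2 := four_mul_le_sq_add _ _
      _ ≤ m ^ 2 := Nat.pow_le_pow_left (hxy hx0 hy0) 2

theorem natCast_le_logb_of_two_pow_le {n m : ℕ} (h : 2 ^ n ≤ m) : (n : ℝ) ≤ Real.logb 2 m := by
  have hm : (0 : ℝ) < m := by exact_mod_cast (Nat.two_pow_pos n).trans_le h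
  rw [Real.le_logb_iff_rpow_le one_lt_two hm, Real.rpow_natCast]
  exact_mod_cast h

noncomputable section

open scoped Classical

variable (G : GameData)

def IsGreedy (t : ℕ) (w : ℤ) : Prop :=
  G.o t = some w ∧ w ∈ G.avail t ∧
    ∀ z ∈ G.avail t, rdist (G.Y (G.vis t)) w (G.a t) ≤ rdist (G.Y (G.vis t)) z (G.a t)

def IsGood (t : ℕ) : Prop := ∃ w ∈ G.I, G.o t = some w

def IsFree (t : ℕ) : Prop := G.a t ∉ G.white (t + 1)

def goodTurns : Finset ℕ := (range G.T).filter G.IsGood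

def collisionTurns : Finset ℕ := (range G.T).filter fun t => ¬ G.IsFree t

def badFreeTurns : Finset ℕ := (range G.T).filter fun t => ¬ G.IsGood t ∧ G.IsFree t

def rightOverflows (i : ℕ) : Finset ℕ := (range G.T).filter fun t =>
  G.vis t = i ∧ G.IsFree t ∧ ∃ w, G.IsGreedy t w ∧ (G.ell : ℤ) < w

def leftOverflows (i : ℕ) : Finset ℕ := (range G.T).filter fun t =>
  G.vis t = i ∧ G.IsFree t ∧ ∃ w, G.IsGreedy t w ∧ w < 1

def stuckTurns (i : ℕ) : Finset ℕ := (range G.T).filter fun t =>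
  G.vis t = i ∧ G.IsFree t ∧ ∀ x ∈ G.I, x ∉ G.avail t

/- When `G.a t ∈ G.Y i`, these are the numbers of elements of `G.Y i` in `[a t, ℓ]` and in
`[1, a t]`. -/
def rightGap (i t : ℕ) : ℕ := rank (G.Y i) (G.ell + 1) - rank (G.Y i) (G.a t)

def leftGap (i t : ℕ) : ℕ := rank (G.Y i) (G.a t) + 1 - rank (G.Y i) 1

variable {G} in
theorem mem_rightOverflows {i t : ℕ} : t ∈ G.rightOverflows i ↔
    t < G.T ∧ G.vis t = i ∧ G.IsFree t ∧ ∃ w, G.IsGreedy t w ∧ (G.ell : ℤ) < w := by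
  simp [rightOverflows]

variable {G} in
theorem mem_leftOverflows {i t : ℕ} : t ∈ G.leftOverflows i ↔
    t < G.T ∧ G.vis t = i ∧ G.IsFree t ∧ ∃ w, G.IsGreedy t w ∧ w < 1 := by
  simp [leftOverflows]

theorem white_mono : Monotone G.white := fun _ _ h =>
  biUnion_subset_biUnion_of_subset_left _ (range_subset_range.2 h)

theorem black_mono : Monotone G.black := fun _ _ h =>
  image_subset_image (range_subset_range.2 h)

theorem occupiedBefore_mono : Monotone G.occupiedBefore := fun _ _ h =>
  union_subset_union (G.black_mono h) (G.white_mono h)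

theorem help_subset_white (t : ℕ) : G.help t ⊆ G.white (t + 1) := fun _ hx =>
  mem_biUnion.2 ⟨t, self_mem_range_succ t, mem_union_left _ hx⟩

theorem mem_white_of_o_eq_some {t : ℕ} {w : ℤ} (h : G.o t = some w) : w ∈ G.white (t + 1) :=
  mem_biUnion.2 ⟨t, self_mem_range_succ t, mem_union_right _ (by simp [h])⟩

theorem a_mem_black (t : ℕ) : G.a t ∈ G.black (t + 1) :=
  mem_image.2 ⟨t, self_mem_range_succ t, rfl⟩

variable {G}

namespace Valid

variable (hG : G.Valid)
include hG

theorem one_le_ell : 1 ≤ G.ell := hG.1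

theorem one_le_r : 1 ≤ G.r := hG.2.1

theorem vis_mem_Icc {t : ℕ} (ht : t < G.T) : G.vis t ∈ Icc 1 G.r :=
  mem_Icc.2 ⟨(hG.2.2.2.2.1 t ht).1, (hG.2.2.2.2.1 t ht).2.1⟩

theorem a_mem_Y {t : ℕ} (ht : t < G.T) : G.a t ∈ G.Y (G.vis t) :=
  (hG.2.2.2.2.1 t ht).2.2.1 (G.a_mem_black t)

theorem a_mem_I {t : ℕ} (ht : t < G.T) : G.a t ∈ G.I := (hG.2.2.2.2.2.2.1 t ht).1

theorem a_mem_Icc {t : ℕ} (ht : t < G.T) : 1 ≤ G.a t ∧ G.a t ≤ G.ell :=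
  mem_Icc.1 (hG.a_mem_I ht)

theorem a_notMem_black {t : ℕ} (ht : t < G.T) : G.a t ∉ G.black t := (hG.2.2.2.2.2.2.1 t ht).2

theorem exists_isGreedy {t : ℕ} (ht : t < G.T) (hex : ∃ x ∈ G.I, x ∈ G.avail t) :
    ∃ w, G.IsGreedy t w :=
  hG.2.2.2.2.2.2.2.1 t ht hex

theorem mem_avail_of_o_eq_some {t : ℕ} {w : ℤ} (ht : t < G.T) (h : G.o t = some w) :
    w ∈ G.avail t := by
  by_cases hex : ∃ x ∈ G.I, x ∈ G.avail t
  · obtain ⟨w', hw', hav, -⟩ := hG.exists_isGreedy ht hex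
    rwa [Option.some.inj (h.symm.trans hw')]
  · obtain h' | ⟨w', hw', hav, -⟩ := hG.2.2.2.2.2.2.2.2.1 t ht hex
    · simp [h] at h'
    · rwa [Option.some.inj (h.symm.trans hw')]

theorem notMem_I_of_mem_reserved {t : ℕ} {x : ℤ} (ht : t ≤ G.T) (hx : x ∈ G.reserved t) :
    x ∉ G.I := by
  obtain ⟨s, hs, hxs⟩ := mem_biUnion.1 hx
  exact (hG.2.2.2.2.2.2.2.2.2.1 s ((mem_range.1 hs).trans_le ht)).2.1 x hxs

theorem I_subset_black : G.I ⊆ G.black G.T := hG.2.2.2.2.2.2.2.2.2.2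

theorem a_injOn : Set.InjOn G.a (range G.T) :=
  injOn_of_forall_lt_ne fun s _ _ ht hst h =>
    hG.a_notMem_black (mem_range.1 ht) (mem_image.2 ⟨s, mem_range.2 hst, h⟩)

theorem mem_avail_of_notMem_occupiedBefore {t : ℕ} {z : ℤ} (ht : t < G.T) (hzI : z ∈ G.I)
    (hzY : z ∈ G.Y (G.vis t)) (hz : z ∉ G.occupiedBefore (t + 1)) : z ∈ G.avail t := by
  refine mem_sdiff.2 ⟨hzY, fun hmem => ?_⟩
  simp only [mem_union, mem_singleton] at hmem
  rcases hmem with ((hocc | hhelp) | rfl) | hres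
  · exact hz (G.occupiedBefore_mono t.le_succ hocc)
  · exact hz (mem_union_right _ (G.help_subset_white t hhelp))
  · exact hz (mem_union_left _ (G.a_mem_black t))
  · exact hG.notMem_I_of_mem_reserved ht.le hres hzI

theorem a_notMem_occupiedBefore {t : ℕ} (ht : t < G.T) (hfree : G.IsFree t) :
    G.a t ∉ G.occupiedBefore t := by
  intro h
  rcases mem_union.1 h with hb | hw
  · exact hG.a_notMem_black ht hb
  · exact hfree (G.white_mono t.le_succ hw)

theorem a_mem_avail_of_lt {s t : ℕ} (hst : s < t) (ht : t < G.T) (hfree : G.IsFree t)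
    (hvis : G.vis s = G.vis t) : G.a t ∈ G.avail s :=
  hG.mem_avail_of_notMem_occupiedBefore (hst.trans ht) (hG.a_mem_I ht) (hvis ▸ hG.a_mem_Y ht)
    fun h => hG.a_notMem_occupiedBefore ht hfree (G.occupiedBefore_mono hst h)

theorem rank_add_rightGap_le {i s t : ℕ} (hs : s ∈ G.rightOverflows i) (hst : s < t)
    (ht : t < G.T) (hfree : G.IsFree t) (hvis : G.vis t = i) :
    rank (G.Y i) (G.a t) + G.rightGap i s ≤ rank (G.Y i) (G.a s) := by
  obtain ⟨hsT, rfl, -, w, ⟨-, -, hmin⟩, hw⟩ := mem_rightOverflows.1 hs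
  have := hG.a_mem_Icc ht
  have := hG.a_mem_Icc hsT
  exact rank_add_gap_le_of_rdist_le_right _ (hvis ▸ hG.a_mem_Y ht) (by omega) (by omega)
    (by omega) (hmin _ (hG.a_mem_avail_of_lt hst ht hfree hvis.symm))

theorem rank_add_leftGap_le {i s t : ℕ} (hs : s ∈ G.leftOverflows i) (hst : s < t)
    (ht : t < G.T) (hfree : G.IsFree t) (hvis : G.vis t = i) :
    rank (G.Y i) (G.a s) + G.leftGap i s ≤ rank (G.Y i) (G.a t) := by
  obtain ⟨hsT, rfl, -, w, ⟨-, hwav, hmin⟩, hw⟩ := mem_leftOverflows.1 hs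
  have := hG.a_mem_Icc ht
  have := hG.a_mem_Icc hsT
  exact rank_add_gap_le_of_rdist_le_left _ (mem_sdiff.1 hwav).1 hw (by omega) (by omega)
    (hmin _ (hG.a_mem_avail_of_lt hst ht hfree hvis.symm))

theorem one_le_rightGap {i t : ℕ} (ht : t < G.T) (hvis : G.vis t = i) : 1 ≤ G.rightGap i t := by
  have := rank_lt_rank (G.Y i) (hvis ▸ hG.a_mem_Y ht) (b := G.ell + 1)
    (by have := hG.a_mem_Icc ht; omega)
  unfold rightGap
  omega

theorem one_le_leftGap {i t : ℕ} (ht : t < G.T) : 1 ≤ G.leftGap i t := by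
  have := rank_mono (G.Y i) (hG.a_mem_Icc ht).1
  unfold leftGap
  omega

theorem rightGap_le_ell {i t : ℕ} (ht : t < G.T) : G.rightGap i t ≤ G.ell := by
  have := rank_mono (G.Y i) (hG.a_mem_Icc ht).1
  have := add_comm (G.ell : ℤ) 1 ▸ rank_add_le (G.Y i) 1 G.ell
  unfold rightGap
  omega

theorem leftGap_le_ell {i t : ℕ} (ht : t < G.T) (hvis : G.vis t = i) :
    G.leftGap i t ≤ G.ell := by
  have := rank_lt_rank (G.Y i) (hvis ▸ hG.a_mem_Y ht) (b := G.ell + 1)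
    (by have := hG.a_mem_Icc ht; omega)
  have := add_comm (G.ell : ℤ) 1 ▸ rank_add_le (G.Y i) 1 G.ell
  unfold leftGap
  omega

theorem two_mul_rightGap_le {i s t : ℕ} (hs : s ∈ G.rightOverflows i)
    (ht : t ∈ G.rightOverflows i) (hst : s < t) : 2 * G.rightGap i s ≤ G.rightGap i t := by
  obtain ⟨htT, hvis, hfree, -⟩ := mem_rightOverflows.1 ht
  have := hG.rank_add_rightGap_le hs hst htT hfree hvis
  have := hG.a_mem_Icc (mem_rightOverflows.1 hs).1
  have := rank_mono (G.Y i) (show G.a s ≤ G.ell + 1 by omega)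
  unfold rightGap at *
  omega

theorem two_mul_leftGap_le {i s t : ℕ} (hs : s ∈ G.leftOverflows i)
    (ht : t ∈ G.leftOverflows i) (hst : s < t) : 2 * G.leftGap i s ≤ G.leftGap i t := by
  obtain ⟨htT, hvis, hfree, -⟩ := mem_leftOverflows.1 ht
  have := hG.rank_add_leftGap_le hs hst htT hfree hvis
  have := rank_mono (G.Y i) (hG.a_mem_Icc (mem_leftOverflows.1 hs).1).1
  unfold leftGap at *
  omega

theorem a_lt_a_of_mem_overflows {i s t : ℕ} (hs : s ∈ G.rightOverflows i)
    (ht : t ∈ G.leftOverflows i) : G.a t < G.a s := by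
  obtain ⟨hsT, hsvis, hsfree, w, ⟨hws, -⟩, hw⟩ := mem_rightOverflows.1 hs
  obtain ⟨htT, htvis, htfree, w', ⟨hwt, -⟩, hw'⟩ := mem_leftOverflows.1 ht
  refine (rank_mono (G.Y i)).reflect_lt ?_
  rcases lt_trichotomy s t with h | rfl | h
  · have := hG.rank_add_rightGap_le hs h htT htfree htvis
    have := hG.one_le_rightGap hsT hsvis
    omega
  · have := Option.some.inj (hws.symm.trans hwt)
    omega
  · have := hG.rank_add_leftGap_le ht h hsT hsfree hsvis
    have := hG.one_le_leftGap (i := i) htT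
    omega

theorem rightGap_add_leftGap_le_ell {i s t : ℕ} (hs : s ∈ G.rightOverflows i)
    (ht : t ∈ G.leftOverflows i) : G.rightGap i s + G.leftGap i t ≤ G.ell := by
  obtain ⟨hsT, -⟩ := mem_rightOverflows.1 hs
  obtain ⟨htT, htvis, -⟩ := mem_leftOverflows.1 ht
  have := rank_lt_rank (G.Y i) (htvis ▸ hG.a_mem_Y htT) (hG.a_lt_a_of_mem_overflows hs ht)
  have := rank_mono (G.Y i) (hG.a_mem_Icc htT).1
  have := hG.a_mem_Icc hsT
  have := rank_mono (G.Y i) (show G.a s ≤ G.ell + 1 by omega)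
  have := add_comm (G.ell : ℤ) 1 ▸ rank_add_le (G.Y i) 1 G.ell
  unfold rightGap leftGap
  omega

theorem two_pow_card_overflows_le (hℓ : 2 ≤ G.ell) (i : ℕ) :
    2 ^ (#(G.rightOverflows i) + #(G.leftOverflows i)) ≤ G.ell ^ 2 := by
  have hR := exists_two_pow_card_sub_one_le (S := G.rightOverflows i)
    (fun t ht => hG.one_le_rightGap (mem_rightOverflows.1 ht).1 (mem_rightOverflows.1 ht).2.1)
    (fun s hs t ht => hG.two_mul_rightGap_le hs ht)
  have hL := exists_two_pow_card_sub_one_le (S := G.leftOverflows i)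
    (fun t ht => hG.one_le_leftGap (i := i) (mem_leftOverflows.1 ht).1)
    (fun s hs t ht => hG.two_mul_leftGap_le hs ht)
  refine two_pow_add_le_sq hℓ (fun h => ?_) (fun h => ?_) (fun hr hl => ?_)
  · obtain ⟨t, ht, hpow⟩ := hR (card_pos.1 h)
    exact hpow.trans (hG.rightGap_le_ell (mem_rightOverflows.1 ht).1)
  · obtain ⟨t, ht, hpow⟩ := hL (card_pos.1 h)
    exact hpow.trans (hG.leftGap_le_ell (mem_leftOverflows.1 ht).1 (mem_leftOverflows.1 ht).2.1)
  · obtain ⟨s, hs, hpows⟩ := hR (card_pos.1 hr)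
    obtain ⟨t, ht, hpowt⟩ := hL (card_pos.1 hl)
    exact (add_le_add hpows hpowt).trans (hG.rightGap_add_leftGap_le_ell hs ht)

theorem card_stuckTurns_le_one (i : ℕ) : #(G.stuckTurns i) ≤ 1 := by
  have key : ∀ s ∈ G.stuckTurns i, ∀ t ∈ G.stuckTurns i, ¬ s < t := by
    intro s hs t ht hst
    simp only [stuckTurns, mem_filter, mem_range] at hs ht
    obtain ⟨-, rfl, -, hstuck⟩ := hs
    obtain ⟨htT, hvis, hfree, -⟩ := ht
    exact hstuck _ (hG.a_mem_I htT) (hG.a_mem_avail_of_lt hst htT hfree hvis.symm)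
  exact card_le_one.2 fun s hs t ht =>
    le_antisymm (not_lt.1 (key t ht s hs)) (not_lt.1 (key s hs t ht))

theorem o_ne_of_lt {s t : ℕ} {w : ℤ} (hst : s < t) (ht : t < G.T) (hs : G.o s = some w) :
    G.o t ≠ some w := fun h =>
  (mem_sdiff.1 (hG.mem_avail_of_o_eq_some ht h)).2 <| mem_union_left _ <| mem_union_left _ <|
    mem_union_left _ <| mem_union_right _ <| G.white_mono hst (G.mem_white_of_o_eq_some hs)

theorem card_goodTurns_le : #G.goodTurns ≤ #(G.white G.T ∩ G.I) := by
  refine card_le_card_of_injOn (fun t => (G.o t).getD 0) (fun t ht => ?_) ?_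
  · obtain ⟨htT, w, hwI, hw⟩ := mem_filter.1 ht
    simp only [hw, Option.getD_some]
    exact mem_inter.2 ⟨G.white_mono (mem_range.1 htT) (G.mem_white_of_o_eq_some hw), hwI⟩
  · refine injOn_of_forall_lt_ne fun s hs t ht hst h => ?_
    obtain ⟨-, w, -, hw⟩ := mem_filter.1 hs
    obtain ⟨htT, w', -, hw'⟩ := mem_filter.1 ht
    simp only [hw, hw', Option.getD_some] at h
    exact hG.o_ne_of_lt hst (mem_range.1 htT) hw (h ▸ hw')

theorem card_collisionTurns_le : #G.collisionTurns ≤ #(G.white G.T ∩ G.I) := by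
  refine card_le_card_of_injOn G.a (fun t ht => ?_) (hG.a_injOn.mono (filter_subset _ _))
  obtain ⟨htT, hcoll⟩ := mem_filter.1 ht
  exact mem_inter.2 ⟨G.white_mono (mem_range.1 htT) (not_not.1 hcoll),
    hG.a_mem_I (mem_range.1 htT)⟩

theorem ell_le_T : G.ell ≤ G.T :=
  calc G.ell = #G.I := by simp [I]
    _ ≤ #(G.black G.T) := card_le_card hG.I_subset_black
    _ ≤ G.T := card_image_le.trans (card_range _).le

theorem ell_le_two_mul_card_white_add_card_badFreeTurns :
    G.ell ≤ 2 * #(G.white G.T ∩ G.I) + #G.badFreeTurns := by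
  have hcover : range G.T ⊆ G.goodTurns ∪ G.collisionTurns ∪ G.badFreeTurns := by
    intro t ht
    simp only [goodTurns, collisionTurns, badFreeTurns, mem_union, mem_filter]
    tauto
  have := (card_le_card hcover).trans ((card_union_le _ _).trans
    (Nat.add_le_add_right (card_union_le _ _) _))
  have := hG.ell_le_T
  have := hG.card_goodTurns_le
  have := hG.card_collisionTurns_le
  rw [card_range] at *
  omega

theorem mem_overflows_of_mem_badFreeTurns {t : ℕ} (ht : t ∈ G.badFreeTurns) :
    t ∈ G.rightOverflows (G.vis t) ∪ G.leftOverflows (G.vis t) ∪ G.stuckTurns (G.vis t) := by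
  obtain ⟨htT, hbad, hfree⟩ := mem_filter.1 ht
  simp only [mem_union, mem_rightOverflows, mem_leftOverflows, stuckTurns, mem_filter]
  by_cases hex : ∃ x ∈ G.I, x ∈ G.avail t
  · obtain ⟨w, hw⟩ := hG.exists_isGreedy (mem_range.1 htT) hex
    have hwI : ¬ (1 ≤ w ∧ w ≤ G.ell) := fun h => hbad ⟨w, mem_Icc.2 h, hw.1⟩
    rcases lt_or_ge (G.ell : ℤ) w with h | h
    · exact Or.inl (Or.inl ⟨mem_range.1 htT, trivial, hfree, w, hw, h⟩)
    · exact Or.inl (Or.inr ⟨mem_range.1 htT, trivial, hfree, w, hw, by omega⟩)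
  · push Not at hex
    exact Or.inr ⟨htT, trivial, hfree, hex⟩

theorem card_badFreeTurns_le_sum : #G.badFreeTurns ≤
    ∑ i ∈ Icc 1 G.r, (#(G.rightOverflows i) + #(G.leftOverflows i) + #(G.stuckTurns i)) := by
  have hsub : G.badFreeTurns ⊆ (Icc 1 G.r).biUnion fun i =>
      G.rightOverflows i ∪ G.leftOverflows i ∪ G.stuckTurns i := fun t ht =>
    mem_biUnion.2 ⟨G.vis t, hG.vis_mem_Icc (mem_range.1 (mem_filter.1 ht).1),
      hG.mem_overflows_of_mem_badFreeTurns ht⟩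
  refine (card_le_card hsub).trans (card_biUnion_le.trans (sum_le_sum fun i _ => ?_))
  exact (card_union_le _ _).trans (Nat.add_le_add_right (card_union_le _ _) _)

theorem card_overflows_le_logb (hℓ : 2 ≤ G.ell) (i : ℕ) :
    ((#(G.rightOverflows i) + #(G.leftOverflows i) : ℕ) : ℝ) ≤ 2 * Real.logb 2 G.ell := by
  have := natCast_le_logb_of_two_pow_le (hG.two_pow_card_overflows_le hℓ i)
  rwa [Nat.cast_pow, Real.logb_pow, Nat.cast_ofNat] at this

theorem card_badFreeTurns_le (hℓ : 2 ≤ G.ell) :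
    (#G.badFreeTurns : ℝ) ≤ G.r * (2 * Real.logb 2 G.ell + 1) :=
  calc (#G.badFreeTurns : ℝ)
      ≤ ∑ i ∈ Icc 1 G.r,
          (((#(G.rightOverflows i) + #(G.leftOverflows i) : ℕ) : ℝ) + #(G.stuckTurns i)) := by
        exact_mod_cast hG.card_badFreeTurns_le_sum
    _ ≤ ∑ i ∈ Icc 1 G.r, (2 * Real.logb 2 G.ell + 1) := by
        refine sum_le_sum fun i _ => add_le_add (hG.card_overflows_le_logb hℓ i) ?_
        exact_mod_cast hG.card_stuckTurns_le_one i
    _ = G.r * (2 * Real.logb 2 G.ell + 1) := by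
        rw [sum_const, Nat.card_Icc, Nat.add_sub_cancel, nsmul_eq_mul]

theorem ell_le_two_mul_card_white_add :
    (G.ell : ℝ) ≤ 2 * #(G.white G.T ∩ G.I) + G.r * (2 * Real.logb 2 G.ell + 1) := by
  have hcount : (G.ell : ℝ) ≤ 2 * #(G.white G.T ∩ G.I) + #G.badFreeTurns := by
    exact_mod_cast hG.ell_le_two_mul_card_white_add_card_badFreeTurns
  rcases hG.one_le_ell.eq_or_lt with hℓ | hℓ
  · have : (1 : ℝ) ≤ G.r := by exact_mod_cast hG.one_le_r
    rw [← hℓ]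
    simp only [Nat.cast_one, Real.logb_one]
    linarith [(#(G.white G.T ∩ G.I)).cast_nonneg (α := ℝ)]
  · linarith [hG.card_badFreeTurns_le hℓ]

end Valid

end

end GameData

/-- In the combinatorial interval game, the white stones in `I` at termination
satisfy `|W_T| ≥ (ℓ − (2 r log₂ ℓ + r)) / 2`, hence
`|W_T| / |I| ≥ 1/2 − O_r((log ℓ)/ℓ)`. -/
theorem game_density_bound (G : GameData) (hG : G.Valid) :
    ((G.ell : ℝ) - (2 * G.r * Real.logb 2 G.ell + G.r)) / 2
      ≤ ((G.white G.T ∩ G.I).card : ℝ) ∧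
    1 / 2 - (2 * G.r * Real.logb 2 G.ell + G.r) / (2 * G.ell)
      ≤ ((G.white G.T ∩ G.I).card : ℝ) / G.ell := by
  have hℓ : (0 : ℝ) < G.ell := by exact_mod_cast hG.one_le_ell
  have hbound := hG.ell_le_two_mul_card_white_add
  refine ⟨by linarith, ?_⟩
  rw [le_div_iff₀ hℓ]
  have hrescale : (1 / 2 - (2 * G.r * Real.logb 2 G.ell + G.r) / (2 * G.ell)) * G.ell
      = ((G.ell : ℝ) - (2 * G.r * Real.logb 2 G.ell + G.r)) / 2 := by
    field_simp
  linarith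
end

section
/- In the combinatorial interval game, within any single phase (where the visible set Y is constant), the left-leaking moves satisfy distance monotonicity: if (a_1, o_1), …, (a_k, o_k) are the chronological pairs of adversary moves in I (with a_i ∉ W_T) and algorithm left-leaking responses o_i ≤ 0, then a_1 < a_2 < ⋯ < a_k and o_1 > o_2 > ⋯ > o_k. -/
/-- The rank of `x` in the increasing enumeration of the finite set `Y`. -/
def rank (Y : Finset ℤ) (x : ℤ) : ℕ := (Y.filter fun y => y < x).card

/-- The relative distance between `x` and `y` with respect to `Y`:
the difference of their ranks in the increasing enumeration of `Y`. -/
def rdist (Y : Finset ℤ) (x y : ℤ) : ℕ := ((rank Y x : ℤ) - (rank Y y : ℤ)).natAbs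


lemma rank_mono (Y : Finset ℤ) {x y : ℤ} (h : x ≤ y) : rank Y x ≤ rank Y y := by
  apply Finset.card_le_card
  intro z hz
  simp only [Finset.mem_filter] at *
  exact ⟨hz.1, lt_of_lt_of_le hz.2 h⟩

lemma rank_strict (Y : Finset ℤ) {x y : ℤ} (hx : x ∈ Y) (h : x < y) :
    rank Y x < rank Y y := by
  apply Finset.card_lt_card
  constructor
  · intro z hz
    simp only [Finset.mem_filter] at *
    exact ⟨hz.1, hz.2.trans h⟩
  · intro hsub
    have := hsub (Finset.mem_filter.mpr ⟨hx, h⟩)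
    simp only [Finset.mem_filter] at this
    exact lt_irrefl x this.2

/-- Distance monotonicity for left-leaking moves within a single phase.
`Y` is the fixed visible finite set, containing `I = [1, ℓ]`.  The pairs
`(a 0, o 0), …, (a (k-1), o (k-1))` are the chronological adversary moves in `I`
together with the algorithm's left-leaking responses `o i ≤ 0`.  All stones are
distinct, and the greedy rule gives `d_Y(o i, a i) ≤ d_Y(a j, a i)` and
`d_Y(o i, a i) ≤ d_Y(o j, a i)` for `j > i` (since those positions were still
available at move `i`).  Then `a 0 < a 1 < ⋯ < a (k-1)` and
`o 0 > o 1 > ⋯ > o (k-1)`. -/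
theorem leaking_monotone (ℓ : ℕ) (hℓ : 1 ≤ ℓ) (Y : Finset ℤ)
    (hIY : Finset.Icc (1 : ℤ) (ℓ : ℤ) ⊆ Y)
    (k : ℕ) (a o : ℕ → ℤ)
    (ha : ∀ i, i < k → a i ∈ Finset.Icc (1 : ℤ) (ℓ : ℤ))
    (hoY : ∀ i, i < k → o i ∈ Y)
    (hol : ∀ i, i < k → o i ≤ 0)
    (hdistinct : ∀ i j, i < j → j < k → a i ≠ a j ∧ o i ≠ o j)
    (hgreedy : ∀ i j, i < j → j < k →
      rdist Y (o i) (a i) ≤ rdist Y (a j) (a i) ∧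
      rdist Y (o i) (a i) ≤ rdist Y (o j) (a i)) :
    ∀ i j, i < j → j < k → a i < a j ∧ o j < o i :=  by
  intro i j hij hjk
  have hik : i < k := hij.trans hjk
  have hai := Finset.mem_Icc.mp (ha i hik)
  have haj := Finset.mem_Icc.mp (ha j hjk)
  have hoi := hol i hik
  have hoj := hol j hjk
  have haiY : a i ∈ Y := hIY (ha i hik)
  have hajY : a j ∈ Y := hIY (ha j hjk)
  have hoiY := hoY i hik
  have hojY := hoY j hjk
  have h1 := (hgreedy i j hij hjk).1
  have h2 := (hgreedy i j hij hjk).2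
  have hd := hdistinct i j hij hjk
  simp only [rdist] at h1 h2
  constructor
  · by_contra hcon
    have haji : a j < a i := lt_of_le_of_ne (not_lt.mp hcon) (Ne.symm hd.1)
    have hr1 : rank Y (a j) < rank Y (a i) := rank_strict Y hajY haji
    have hr2 : rank Y (o i) < rank Y (a j) := rank_strict Y hoiY (by omega)
    omega
  · by_contra hcon
    have hoij : o i < o j := lt_of_le_of_ne (not_lt.mp hcon) hd.2
    have hr1 : rank Y (o i) < rank Y (o j) := rank_strict Y hoiY hoij
    have hr2 : rank Y (o j) ≤ rank Y (a i) := rank_mono Y (by omega)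
    omega
end

section
/- Let f : [0,∞) → [0,∞) be non-decreasing with f(x) → ∞. Then there exists a strictly increasing, strictly concave function g : [0,∞) → [0,∞) and a constant x* ≥ 0 such that g(x) → ∞ as x → ∞ and g(x) ≤ f(x) for all x ≥ x*. -/
/-!
Choose thresholds `b 0 < b 1 < ⋯`, growing at least geometrically, with `n + 3 ≤ f` on
`[b n, ∞)`. The polygon through the points `(b n, n)` has decreasing slopes `1 / (b (n+1) - b n)`,
so it is the infimum of its secant lines and hence concave; it tends to infinity and stays below
`f - 2` from `b 0` on. Adding the bounded, strictly increasing, strictly concave `2 - (x + 1)⁻¹`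
makes it strictly increasing and strictly concave.
-/

open Filter Set

theorem ConcaveOn.ciInf {E ι : Type*} [AddCommMonoid E] [Module ℝ E] [Nonempty ι] {s : Set E}
    {f : ι → E → ℝ} (hf : ∀ i, ConcaveOn ℝ s (f i))
    (hbdd : ∀ x ∈ s, BddBelow (range fun i => f i x)) :
    ConcaveOn ℝ s fun x => ⨅ i, f i x := by
  refine ⟨(hf (Classical.arbitrary ι)).1, fun x hx y hy a c ha hc hac => le_ciInf fun i => ?_⟩
  calc a • (⨅ i, f i x) + c • ⨅ i, f i y ≤ a • f i x + c • f i y := by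
        gcongr
        exacts [ciInf_le (hbdd x hx) i, ciInf_le (hbdd y hy) i]
    _ ≤ f i (a • x + c • y) := (hf i).2 hx hy ha hc hac

lemma strictConcaveOn_sub_inv_add_one (c : ℝ) :
    StrictConcaveOn ℝ (Ici 0) fun x : ℝ => c - (x + 1)⁻¹ := by
  have h := ((strictConvexOn_zpow (m := -1) (by norm_num) (by norm_num)).translate_left 1).subset
    (fun x (hx : 0 ≤ x) => show 0 < 1 + x by linarith) (convex_Ici 0)
  refine (h.neg.add_const c).congr fun x _ => ?_
  simp [sub_eq_neg_add]

lemma strictMonoOn_sub_inv_add_one (c : ℝ) :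
    StrictMonoOn (fun x : ℝ => c - (x + 1)⁻¹) (Ici 0) := fun x (hx : 0 ≤ x) y _ hxy =>
  sub_lt_sub_left (inv_strictAnti₀ (by linarith) (by linarith)) c

lemma exists_le_and_lt_succ {α : Type*} [LinearOrder α] {b : ℕ → α} {x : α} (h₀ : b 0 ≤ x)
    {m : ℕ} (hm : x < b m) : ∃ n, b n ≤ x ∧ x < b (n + 1) := by
  induction m with
  | zero => exact absurd h₀ hm.not_ge
  | succ m ih =>
    by_cases h : x < b m
    · exact ih h
    · exact ⟨m, not_lt.1 h, hm⟩

noncomputable def secantLine (b : ℕ → ℝ) (n : ℕ) (x : ℝ) : ℝ :=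
  n + (x - b n) / (b (n + 1) - b n)

noncomputable def secantEnvelope (b : ℕ → ℝ) (x : ℝ) : ℝ :=
  ⨅ n, secantLine b n x

lemma concaveOn_secantLine (b : ℕ → ℝ) (n : ℕ) {s : Set ℝ} (hs : Convex ℝ s) :
    ConcaveOn ℝ s (secantLine b n) := by
  refine ⟨hs, fun x _ y _ a c _ _ hac => le_of_eq ?_⟩
  obtain rfl : c = 1 - a := by linarith
  simp only [secantLine, smul_eq_mul]
  ring

section GeometricThresholds

variable {b : ℕ → ℝ} (hb₀ : 0 ≤ b 0) (hb : ∀ n, 2 * b n + 1 ≤ b (n + 1))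
include hb₀ hb

lemma nonneg_of_geometric (n : ℕ) : 0 ≤ b n := by
  induction n with
  | zero => exact hb₀
  | succ n ih => linarith [hb n]

lemma natCast_le_of_geometric (n : ℕ) : (n : ℝ) ≤ b n := by
  induction n with
  | zero => simpa using hb₀
  | succ n ih => push_cast; linarith [hb n, nonneg_of_geometric hb₀ hb n]

lemma gap_pos_of_geometric (n : ℕ) : 0 < b (n + 1) - b n := by
  linarith [hb n, nonneg_of_geometric hb₀ hb n]

lemma monotone_gap_of_geometric : Monotone fun n => b (n + 1) - b n :=
  monotone_nat_of_le_succ fun n => by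
    linarith [hb (n + 1), nonneg_of_geometric hb₀ hb n]

lemma mul_gap_le_of_geometric {k n : ℕ} (hkn : k ≤ n) :
    ((n : ℝ) - k) * (b (k + 1) - b k) ≤ b n - b k := by
  induction n, hkn using Nat.le_induction with
  | base => simp
  | succ n hkn ih =>
    have hmono := monotone_gap_of_geometric hb₀ hb hkn
    push_cast
    linarith

lemma sub_one_le_secantLine {x : ℝ} (hx : 0 ≤ x) (n : ℕ) : (n : ℝ) - 1 ≤ secantLine b n x := by
  have hgap := gap_pos_of_geometric hb₀ hb n
  have : -1 ≤ (x - b n) / (b (n + 1) - b n) := by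
    rw [le_div_iff₀ hgap]
    linarith [hb n]
  simp only [secantLine]
  linarith

lemma bddBelow_secantLine {x : ℝ} (hx : 0 ≤ x) : BddBelow (range fun n => secantLine b n x) :=
  ⟨-1, forall_mem_range.2 fun n => by
    linarith [sub_one_le_secantLine hb₀ hb hx n, (n.cast_nonneg : (0 : ℝ) ≤ n)]⟩

lemma concaveOn_secantEnvelope : ConcaveOn ℝ (Ici 0) (secantEnvelope b) :=
  ConcaveOn.ciInf (fun n => concaveOn_secantLine b n (convex_Ici 0))
    fun _ hx => bddBelow_secantLine hb₀ hb hx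

lemma monotoneOn_secantEnvelope : MonotoneOn (secantEnvelope b) (Ici 0) :=
  fun x (hx : 0 ≤ x) _ _ hxy => ciInf_mono (bddBelow_secantLine hb₀ hb hx) fun n => by
    have := gap_pos_of_geometric hb₀ hb n
    unfold secantLine
    gcongr

lemma neg_one_le_secantEnvelope {x : ℝ} (hx : 0 ≤ x) : -1 ≤ secantEnvelope b x :=
  le_ciInf fun n => by
    linarith [sub_one_le_secantLine hb₀ hb hx n, (n.cast_nonneg : (0 : ℝ) ≤ n)]

lemma secantEnvelope_le {x : ℝ} (hx : 0 ≤ x) {n : ℕ} (hxn : x ≤ b (n + 1)) :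
    secantEnvelope b x ≤ n + 1 := by
  refine (ciInf_le (bddBelow_secantLine hb₀ hb hx) n).trans ?_
  have : (x - b n) / (b (n + 1) - b n) ≤ 1 := by
    rw [div_le_one (gap_pos_of_geometric hb₀ hb n)]
    linarith
  simp only [secantLine]
  linarith

lemma sub_one_le_secantEnvelope {n : ℕ} {x : ℝ} (hnx : b n ≤ x) :
    (n : ℝ) - 1 ≤ secantEnvelope b x := by
  have hx : 0 ≤ x := (nonneg_of_geometric hb₀ hb n).trans hnx
  refine le_ciInf fun k => ?_
  rcases le_total n k with hnk | hkn
  · linarith [sub_one_le_secantLine hb₀ hb hx k, (Nat.cast_le.2 hnk : (n : ℝ) ≤ k)]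
  · -- for `k ≤ n` the line `secantLine b k` lies above the polygon at `b n`, by convexity of `b`
    have hgap := gap_pos_of_geometric hb₀ hb k
    have : (n : ℝ) - k ≤ (x - b k) / (b (k + 1) - b k) := by
      rw [le_div_iff₀ hgap]
      linarith [mul_gap_le_of_geometric hb₀ hb hkn]
    simp only [secantLine]
    linarith

lemma tendsto_secantEnvelope : Tendsto (secantEnvelope b) atTop atTop :=
  tendsto_atTop_atTop.2 fun C => by
    obtain ⟨n, hn⟩ := exists_nat_ge (C + 1)
    exact ⟨b n, fun x hx => by linarith [sub_one_le_secantEnvelope hb₀ hb hx]⟩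

end GeometricThresholds

noncomputable def dominatingSeq (A : ℕ → ℝ) : ℕ → ℝ
  | 0 => max (A 0) 0
  | n + 1 => max (A (n + 1)) (2 * dominatingSeq A n + 1)

lemma le_dominatingSeq (A : ℕ → ℝ) (n : ℕ) : A n ≤ dominatingSeq A n := by
  cases n <;> exact le_max_left _ _

lemma dominatingSeq_zero_nonneg (A : ℕ → ℝ) : 0 ≤ dominatingSeq A 0 :=
  le_max_right _ _

lemma dominatingSeq_succ_ge (A : ℕ → ℝ) (n : ℕ) :
    2 * dominatingSeq A n + 1 ≤ dominatingSeq A (n + 1) :=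
  le_max_right _ _

theorem exists_concave_minorant_general (f : ℝ → ℝ)
    (htop : Filter.Tendsto f Filter.atTop Filter.atTop) :
    ∃ g : ℝ → ℝ, StrictMonoOn g (Set.Ici 0) ∧ StrictConcaveOn ℝ (Set.Ici 0) g ∧
      (∀ x : ℝ, 0 ≤ x → 0 ≤ g x) ∧ Filter.Tendsto g Filter.atTop Filter.atTop ∧
      ∃ xstar : ℝ, 0 ≤ xstar ∧ ∀ x : ℝ, xstar ≤ x → g x ≤ f x := by
  choose A hA using fun n : ℕ => tendsto_atTop_atTop.1 htop ((n : ℝ) + 3)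
  set b := dominatingSeq A
  have hb₀ : 0 ≤ b 0 := dominatingSeq_zero_nonneg A
  have hb := dominatingSeq_succ_ge A
  have hφ : ∀ x : ℝ, 0 ≤ x → 1 ≤ 2 - (x + 1)⁻¹ ∧ 2 - (x + 1)⁻¹ ≤ 2 := fun x hx =>
    ⟨by linarith [inv_le_one_of_one_le₀ (by linarith : (1 : ℝ) ≤ x + 1)],
      by linarith [inv_nonneg.2 (by linarith : (0 : ℝ) ≤ x + 1)]⟩
  refine ⟨fun x => secantEnvelope b x + (2 - (x + 1)⁻¹),
    (monotoneOn_secantEnvelope hb₀ hb).add_strictMono (strictMonoOn_sub_inv_add_one 2),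
    (concaveOn_secantEnvelope hb₀ hb).add_strictConcaveOn (strictConcaveOn_sub_inv_add_one 2),
    fun x hx => by linarith [neg_one_le_secantEnvelope hb₀ hb hx, (hφ x hx).1],
    ?_, b 0, hb₀, fun x hbx => ?_⟩
  · refine tendsto_atTop_add_right_of_le' _ 1 (tendsto_secantEnvelope hb₀ hb) ?_
    filter_upwards [eventually_ge_atTop 0] with x hx using (hφ x hx).1
  · have hx : 0 ≤ x := hb₀.trans hbx
    obtain ⟨m, hm⟩ := exists_nat_gt x
    obtain ⟨n, hnx, hxn⟩ := exists_le_and_lt_succ hbx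
      (hm.trans_le (natCast_le_of_geometric hb₀ hb m))
    linarith [secantEnvelope_le hb₀ hb hx hxn.le, (hφ x hx).2,
      hA n x ((le_dominatingSeq A n).trans hnx)]

/-- For any non-decreasing `f : [0,∞) → [0,∞)` with `f(x) → ∞`, there is a strictly
increasing, strictly concave `g : [0,∞) → [0,∞)` with `g(x) → ∞` and a constant
`x* ≥ 0` such that `g(x) ≤ f(x)` for all `x ≥ x*`. -/
theorem exists_concave_minorant (f : ℝ → ℝ)
    (hmono : MonotoneOn f (Set.Ici 0))
    (hnonneg : ∀ x : ℝ, 0 ≤ x → 0 ≤ f x)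
    (htop : Filter.Tendsto f Filter.atTop Filter.atTop) :
    ∃ g : ℝ → ℝ, StrictMonoOn g (Set.Ici 0) ∧ StrictConcaveOn ℝ (Set.Ici 0) g ∧
      (∀ x : ℝ, 0 ≤ x → 0 ≤ g x) ∧ Filter.Tendsto g Filter.atTop Filter.atTop ∧
      ∃ xstar : ℝ, 0 ≤ xstar ∧ ∀ x : ℝ, xstar ≤ x → g x ≤ f x :=
  exists_concave_minorant_general f htop
end

section
/- Let f : ℝ_{≥0} → ℝ_{≥0} be non-decreasing with f(x) → ∞. Then there exists a strictly increasing sequence of reals r_0 = 0 < r_1 < r_2 < ⋯ with r_k → ∞ such that, defining the regions R_k = {x ∈ ℤ^d : r_k ≤ ‖x‖_∞ < r_{k+1}}, every axis-parallel box B ⊂ ℤ^d of side length ℓ ≥ 1 intersects at most f(ℓ) + 2 of the regions R_k. -/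
/-!
Choose gaps `c k ≥ 1` so large that `f ≥ k + 1` beyond `c k`, and let `r` be their partial
sums. The ℓ∞ norms of the points of a box of side `ℓ` differ by less than `ℓ`, so if the box
meets regions `j` and `k + 1` with `j < k`, then region `k` lies strictly between two norms
attained in the box; its width `c k` is then less than `ℓ`, whence `k + 1 ≤ f ℓ`. So all regions
met, except the first two, have index at most `f ℓ`.
-/

/-- The `ℓ∞` norm of a lattice point. -/
def normInf {d : ℕ} (x : Fin d → ℤ) : ℕ := Finset.univ.sup fun i => (x i).natAbs

open Finset Filter

lemma normInf_lt_add_of_mem_box {d ℓ : ℕ} (hℓ : 0 < ℓ) {lo x y : Fin d → ℤ}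
    (hx : ∀ i, lo i ≤ x i ∧ x i ≤ lo i + (ℓ : ℤ) - 1)
    (hy : ∀ i, lo i ≤ y i ∧ y i ≤ lo i + (ℓ : ℤ) - 1) :
    normInf x < normInf y + ℓ := by
  rw [normInf, Finset.sup_lt_iff (by simp; omega)]
  intro i _
  have hyi : (y i).natAbs ≤ normInf y := Finset.le_sup (f := fun j => (y j).natAbs) (mem_univ i)
  have := hx i
  have := hy i
  omega

def regionsMeetingBox {d : ℕ} (r : ℕ → ℝ) (lo : Fin d → ℤ) (ℓ : ℕ) : Set ℕ :=
  {k : ℕ | ∃ x : Fin d → ℤ,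
    (∀ i, lo i ≤ x i ∧ x i ≤ lo i + (ℓ : ℤ) - 1) ∧
    r k ≤ (normInf x : ℝ) ∧ (normInf x : ℝ) < r (k + 1)}

lemma gap_lt_of_mem_regionsMeetingBox {d ℓ : ℕ} (hℓ : 0 < ℓ) {c : ℕ → ℝ} (hc : ∀ i, 0 ≤ c i)
    {lo : Fin d → ℤ} {j k : ℕ} (hjk : j < k)
    (hj : j ∈ regionsMeetingBox (fun n => ∑ i ∈ range n, c i) lo ℓ)
    (hk : k + 1 ∈ regionsMeetingBox (fun n => ∑ i ∈ range n, c i) lo ℓ) :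
    c k < ℓ := by
  obtain ⟨x, hx, -, hxj⟩ := hj
  obtain ⟨y, hy, hyk, -⟩ := hk
  have hyx : (normInf y : ℝ) < normInf x + ℓ := by
    exact_mod_cast normInf_lt_add_of_mem_box hℓ hy hx
  have hjk' : ∑ i ∈ range (j + 1), c i ≤ ∑ i ∈ range k, c i :=
    sum_le_sum_of_subset_of_nonneg (range_subset_range.mpr hjk) fun i _ _ => hc i
  dsimp only at hxj hyk
  rw [sum_range_succ] at hyk
  linarith

lemma finite_and_ncard_le_of_forall_add_two_le {S : Set ℕ} {N : ℕ}
    (h : ∀ j ∈ S, ∀ k ∈ S, j + 2 ≤ k → k ≤ N) : S.Finite ∧ S.ncard ≤ N + 2 := by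
  rcases S.eq_empty_or_nonempty with rfl | hS
  · simp
  have hsub : S ⊆ ↑(Icc (sInf S) (sInf S + 1 + N)) := by
    intro k hk
    have hmin := Nat.sInf_le hk
    have := h _ (Nat.sInf_mem hS) k hk
    simp only [coe_Icc, Set.mem_Icc]
    omega
  refine ⟨(Icc _ _).finite_toSet.subset hsub, ?_⟩
  calc S.ncard ≤ (Icc (sInf S) (sInf S + 1 + N)).card :=
        (Set.ncard_le_ncard hsub (Icc _ _).finite_toSet).trans_eq (Set.ncard_coe_finset _)
    _ = N + 2 := by rw [Nat.card_Icc]; omega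

lemma exists_gaps_of_tendsto_atTop {f : ℝ → ℝ} (htop : Tendsto f atTop atTop) :
    ∃ c : ℕ → ℝ, (∀ k, 1 ≤ c k) ∧ ∀ k x, c k ≤ x → (k : ℝ) + 1 ≤ f x := by
  have hg (k : ℕ) : ∃ C : ℝ, ∀ x, C ≤ x → (k : ℝ) + 1 ≤ f x :=
    eventually_atTop.mp (htop.eventually_ge_atTop _)
  choose g hg using hg
  exact ⟨fun k => max 1 (g k), fun k => le_max_left _ _,
    fun k x hx => hg k x ((le_max_right _ _).trans hx)⟩

lemma strictMono_sum_range_of_pos {c : ℕ → ℝ} (hc : ∀ i, 0 < c i) :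
    StrictMono fun n => ∑ i ∈ range n, c i :=
  strictMono_nat_of_lt_succ fun n => by simpa [sum_range_succ] using hc n

lemma tendsto_sum_range_atTop_of_one_le {c : ℕ → ℝ} (hc : ∀ i, 1 ≤ c i) :
    Tendsto (fun n => ∑ i ∈ range n, c i) atTop atTop := by
  refine tendsto_atTop_mono (fun n => ?_) tendsto_natCast_atTop_atTop
  simpa using card_nsmul_le_sum (range n) c 1 fun i _ => hc i

theorem exists_partition_few_regions_general (d : ℕ) (f : ℝ → ℝ)
    (hnonneg : ∀ x : ℝ, 0 ≤ x → 0 ≤ f x)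
    (htop : Filter.Tendsto f Filter.atTop Filter.atTop) :
    ∃ r : ℕ → ℝ, r 0 = 0 ∧ StrictMono r ∧
      Filter.Tendsto r Filter.atTop Filter.atTop ∧
      ∀ ℓ : ℕ, 1 ≤ ℓ → ∀ lo : Fin d → ℤ,
        {k : ℕ | ∃ x : Fin d → ℤ,
            (∀ i, lo i ≤ x i ∧ x i ≤ lo i + (ℓ : ℤ) - 1) ∧
            r k ≤ (normInf x : ℝ) ∧ (normInf x : ℝ) < r (k + 1)}.Finite ∧
        ({k : ℕ | ∃ x : Fin d → ℤ,
            (∀ i, lo i ≤ x i ∧ x i ≤ lo i + (ℓ : ℤ) - 1) ∧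
            r k ≤ (normInf x : ℝ) ∧ (normInf x : ℝ) < r (k + 1)}.ncard : ℝ)
          ≤ f ℓ + 2 := by
  obtain ⟨c, hc1, hcf⟩ := exists_gaps_of_tendsto_atTop htop
  have hc0 (i : ℕ) : 0 < c i := zero_lt_one.trans_le (hc1 i)
  refine ⟨fun n => ∑ i ∈ range n, c i, sum_range_zero c, strictMono_sum_range_of_pos hc0,
    tendsto_sum_range_atTop_of_one_le hc1, fun ℓ hℓ lo => ?_⟩
  have hbound : ∀ j ∈ regionsMeetingBox (fun n => ∑ i ∈ range n, c i) lo ℓ,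
      ∀ k ∈ regionsMeetingBox (fun n => ∑ i ∈ range n, c i) lo ℓ, j + 2 ≤ k → k ≤ ⌊f ℓ⌋₊ := by
    rintro j hj (_ | k) hk hjk
    · omega
    have hck := gap_lt_of_mem_regionsMeetingBox hℓ (fun i => (hc0 i).le) (by omega) hj hk
    exact Nat.le_floor (by exact_mod_cast hcf k ℓ hck.le)
  obtain ⟨hfin, hcard⟩ := finite_and_ncard_le_of_forall_add_two_le hbound
  refine ⟨hfin, ?_⟩
  calc _ ≤ ((⌊f ℓ⌋₊ + 2 : ℕ) : ℝ) := by exact_mod_cast hcard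
    _ ≤ f ℓ + 2 := by push_cast; linarith [Nat.floor_le (hnonneg ℓ ℓ.cast_nonneg)]

/-- Given non-decreasing `f : ℝ_{≥0} → ℝ_{≥0}` with `f(x) → ∞`, there is a strictly
increasing sequence `r 0 = 0 < r 1 < r 2 < ⋯ → ∞` such that, for the regions
`R_k = {x ∈ ℤ^d : r k ≤ ‖x‖_∞ < r (k+1)}`, every axis-parallel box of side
length `ℓ ≥ 1` intersects at most `f(ℓ) + 2` of the regions. -/
theorem exists_partition_few_regions (d : ℕ) (f : ℝ → ℝ)
    (hmono : MonotoneOn f (Set.Ici 0))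
    (hnonneg : ∀ x : ℝ, 0 ≤ x → 0 ≤ f x)
    (htop : Filter.Tendsto f Filter.atTop Filter.atTop) :
    ∃ r : ℕ → ℝ, r 0 = 0 ∧ StrictMono r ∧
      Filter.Tendsto r Filter.atTop Filter.atTop ∧
      ∀ ℓ : ℕ, 1 ≤ ℓ → ∀ lo : Fin d → ℤ,
        {k : ℕ | ∃ x : Fin d → ℤ,
            (∀ i, lo i ≤ x i ∧ x i ≤ lo i + (ℓ : ℤ) - 1) ∧
            r k ≤ (normInf x : ℝ) ∧ (normInf x : ℝ) < r (k + 1)}.Finite ∧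
        ({k : ℕ | ∃ x : Fin d → ℤ,
            (∀ i, lo i ≤ x i ∧ x i ≤ lo i + (ℓ : ℤ) - 1) ∧
            r k ≤ (normInf x : ℝ) ∧ (normInf x : ℝ) < r (k + 1)}.ncard : ℝ)
          ≤ f ℓ + 2 :=
  exists_partition_few_regions_general d f hnonneg htop
end

section
/- For any axis-parallel rectangle B ⊂ ℤ^d and any ℓ∞-annulus R_k = {x ∈ ℤ^d : r ≤ ‖x‖_∞ < r'} (with 0 ≤ r < r'), the intersection B ∩ R_k can be partitioned into at most 2d mutually disjoint axis-parallel rectangles. -/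
/-- An axis-parallel rectangle in `ℤ^d`: a product of integer intervals. -/
def axisRect {d : ℕ} (lo hi : Fin d → ℤ) : Set (Fin d → ℤ) :=
  {x | ∀ i, lo i ≤ x i ∧ x i ≤ hi i}

open Function

section Rectangles

variable {d : ℕ}

theorem axisRect_eq_Icc (lo hi : Fin d → ℤ) : axisRect lo hi = Set.Icc lo hi := by
  ext x
  simp only [axisRect, Set.mem_ofPred_eq, Set.mem_Icc, Pi.le_def, forall_and]

def IsAxisRect (S : Set (Fin d → ℤ)) : Prop :=
  ∃ lo hi, axisRect lo hi = S

theorem isAxisRect_axisRect (lo hi : Fin d → ℤ) : IsAxisRect (axisRect lo hi) :=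
  ⟨lo, hi, rfl⟩

theorem IsAxisRect.inter {S T : Set (Fin d → ℤ)} (hS : IsAxisRect S) (hT : IsAxisRect T) :
    IsAxisRect (S ∩ T) := by
  obtain ⟨lo, hi, rfl⟩ := hS
  obtain ⟨lo', hi', rfl⟩ := hT
  exact ⟨lo ⊔ lo', hi ⊓ hi', by simp only [axisRect_eq_Icc, Set.Icc_inter_Icc]⟩

theorem exists_fin_rect_partition {ι : Type*} [Fintype ι] (P : ι → Set (Fin d → ℤ))
    (hrect : ∀ k, IsAxisRect (P k)) (hdisj : Pairwise (Disjoint on P)) :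
    ∃ p : Fin (Fintype.card ι) → (Fin d → ℤ) × (Fin d → ℤ),
      (∀ i j, i ≠ j → Disjoint (axisRect (p i).1 (p i).2) (axisRect (p j).1 (p j).2)) ∧
      ⋃ i, axisRect (p i).1 (p i).2 = ⋃ k, P k := by
  choose lo hi hP using hrect
  let e := (Fintype.equivFin ι).symm
  refine ⟨fun i => (lo (e i), hi (e i)), fun i j hij => ?_, ?_⟩
  · simpa only [hP] using hdisj (e.injective.ne hij)
  · simpa only [hP] using e.surjective.iUnion_comp P

end Rectangles

section Shells

variable {d : ℕ}

theorem le_normInf_iff (hd : 0 < d) {x : Fin d → ℤ} {a : ℕ} :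
    a ≤ normInf x ↔ ∃ i, a ≤ (x i).natAbs := by
  refine ⟨fun h => ?_, fun ⟨i, hi⟩ =>
    hi.trans (Finset.le_sup (f := fun i => (x i).natAbs) (Finset.mem_univ i))⟩
  obtain ⟨i, -, hi⟩ := Finset.exists_mem_eq_sup Finset.univ ⟨⟨0, hd⟩, Finset.mem_univ _⟩
    fun i => (x i).natAbs
  exact ⟨i, hi ▸ h⟩

theorem normInf_lt_iff (hd : 0 < d) {x : Fin d → ℤ} {c : ℕ} :
    normInf x < c ↔ ∀ i, (x i).natAbs < c := by
  simpa only [not_le, not_exists] using (le_normInf_iff hd (x := x) (a := c)).not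

variable (a c : ℕ)

def shellPiece (i : Fin d) (s : Bool) : Set (Fin d → ℤ) :=
  {x | (∀ j < i, (x j).natAbs < a) ∧ a ≤ (x i).natAbs ∧ (0 ≤ x i ↔ s) ∧ ∀ j, (x j).natAbs < c}

theorem isAxisRect_shellPiece (i : Fin d) (s : Bool) : IsAxisRect (shellPiece a c i s) := by
  refine ⟨fun j => if j < i then 1 - a else if j = i ∧ s then a else 1 - c,
    fun j => if j < i then a - 1 else if j = i ∧ !s then min (-a) (-1) else c - 1, ?_⟩
  ext x
  simp only [axisRect, shellPiece, Set.mem_ofPred_eq]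
  constructor
  · intro h
    have hxi : a ≤ (x i).natAbs ∧ (0 ≤ x i ↔ s) ∧ (x i).natAbs < c := by
      have := h i
      cases s <;> simp at this ⊢ <;> omega
    refine ⟨fun j hj => ?_, hxi.1, hxi.2.1, fun j => ?_⟩
    · have := h j
      simp only [if_pos hj] at this
      omega
    · have := h j
      rcases lt_trichotomy j i with hj | rfl | hj
      · simp only [if_pos hj] at this; omega
      · exact hxi.2.2
      · simp only [if_neg (not_lt_of_gt hj), hj.ne', false_and, if_false] at this; omega
  · rintro ⟨hlt, hge, hsign, hc⟩ j
    rcases lt_trichotomy j i with hj | rfl | hj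
    · simp only [if_pos hj]; have := hlt j hj; omega
    · have := hc j
      cases s <;> simp at hsign ⊢ <;> omega
    · simp only [if_neg (not_lt_of_gt hj), hj.ne', false_and, if_false]; have := hc j; omega

theorem pairwise_disjoint_shellPiece :
    Pairwise (Disjoint on fun q : Fin d × Bool => shellPiece a c q.1 q.2) := by
  rintro ⟨i, s⟩ ⟨i', s'⟩ hne
  refine Set.disjoint_left.2 fun x ⟨hlt, hge, hsign, _⟩ ⟨hlt', hge', hsign', _⟩ => ?_
  rcases lt_trichotomy i i' with h | rfl | h
  · exact (hlt' i h).not_ge hge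
  · exact hne (congrArg _ (Bool.eq_iff_iff.2 (hsign.symm.trans hsign')))
  · exact (hlt i' h).not_ge hge'

theorem iUnion_shellPiece (hd : 0 < d) :
    ⋃ q : Fin d × Bool, shellPiece a c q.1 q.2 = {x | a ≤ normInf x ∧ normInf x < c} := by
  ext x
  simp only [Set.mem_iUnion, Prod.exists, Set.mem_ofPred_eq, le_normInf_iff hd, normInf_lt_iff hd]
  constructor
  · rintro ⟨i, s, -, hge, -, hc⟩
    exact ⟨⟨i, hge⟩, hc⟩
  · rintro ⟨hge, hc⟩
    obtain ⟨i, hmin⟩ := exists_minimal_of_wellFoundedLT _ hge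
    exact ⟨i, decide (0 ≤ x i), fun j hj => not_le.1 (hmin.not_prop_of_lt hj), hmin.prop,
      decide_eq_true_iff.symm, hc⟩

end Shells

theorem annulus_inter_rect_partition_general (d : ℕ) (hd : 1 ≤ d)
    (lo hi : Fin d → ℤ) (r r' : ℝ) :
    ∃ n : ℕ, n ≤ 2 * d ∧ ∃ p : Fin n → (Fin d → ℤ) × (Fin d → ℤ),
      (∀ i j, i ≠ j →
        Disjoint (axisRect (p i).1 (p i).2) (axisRect (p j).1 (p j).2)) ∧
      (⋃ i, axisRect (p i).1 (p i).2) =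
        axisRect lo hi ∩ {x | r ≤ (normInf x : ℝ) ∧ (normInf x : ℝ) < r'} := by
  have hannulus : {x : Fin d → ℤ | r ≤ (normInf x : ℝ) ∧ (normInf x : ℝ) < r'} =
      ⋃ q : Fin d × Bool, shellPiece ⌈r⌉₊ ⌈r'⌉₊ q.1 q.2 := by
    simp only [iUnion_shellPiece _ _ hd, Nat.ceil_le, Nat.lt_ceil]
  obtain ⟨p, hdisj, hunion⟩ := exists_fin_rect_partition
    (fun q : Fin d × Bool => axisRect lo hi ∩ shellPiece ⌈r⌉₊ ⌈r'⌉₊ q.1 q.2)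
    (fun q => (isAxisRect_axisRect lo hi).inter (isAxisRect_shellPiece _ _ q.1 q.2))
    ((pairwise_disjoint_shellPiece _ _).mono fun _ _ h => h.mono inf_le_right inf_le_right)
  refine ⟨_, by simp [mul_comm], p, hdisj, ?_⟩
  rw [hunion, hannulus, Set.inter_iUnion]

/-- For any axis-parallel rectangle `B ⊂ ℤ^d` and any `ℓ∞`-annulus
`{x : r ≤ ‖x‖_∞ < r'}` (with `0 ≤ r < r'`), the intersection can be partitioned
into at most `2d` mutually disjoint axis-parallel rectangles. -/
theorem annulus_inter_rect_partition (d : ℕ) (hd : 1 ≤ d)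
    (lo hi : Fin d → ℤ) (r r' : ℝ) (hr : 0 ≤ r) (hrr' : r < r') :
    ∃ n : ℕ, n ≤ 2 * d ∧ ∃ p : Fin n → (Fin d → ℤ) × (Fin d → ℤ),
      (∀ i j, i ≠ j →
        Disjoint (axisRect (p i).1 (p i).2) (axisRect (p j).1 (p j).2)) ∧
      (⋃ i, axisRect (p i).1 (p i).2) =
        axisRect lo hi ∩ {x | r ≤ (normInf x : ℝ) ∧ (normInf x : ℝ) < r'} :=
  annulus_inter_rect_partition_general d hd lo hi r r'
end
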